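/- arXiv:2308.08648 — 9 statements merged into one kernel-verified Lean document; each statement's English description precedes it below -/
import Mathlib

section
/- Let H be an r × n matrix over F₂ and let x ∈ ker H be a nonzero vector of minimum Hamming weight among all nonzero elements of ker H. Let S = supp(x) and let H' be the r × |S| matrix obtained from H by keeping only the columns indexed by S. Then ker H' = {0, 𝟙}, i.e., the kernel of H' consists exactly of the zero vector and the all-ones vector on S. (This is the key step in the paper's proof that the restricted check matrices H_Ā, H_B̄ of a non-degenerate ancilla patch have kernel {0, 𝟙}.) -/
/-- Hamming weight of a vector over `ZMod 2`. -/
def wt {ι : Type} [Fintype ι] (v : ι → ZMod 2) : ℕ :=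
  (Finset.univ.filter fun i => v i ≠ 0).card

/-- If `x` is a nonzero vector of minimum Hamming weight in `ker H`, then the kernel of the
matrix `H'` obtained from `H` by restricting to the columns in the support of `x` consists
exactly of the zero vector and the all-ones vector. -/
theorem restricted_kernel_of_min_weight_kernel_vector
    {r n : ℕ} (H : Matrix (Fin r) (Fin n) (ZMod 2))
    (x : Fin n → ZMod 2) (hx0 : x ≠ 0) (hxker : H.mulVec x = 0)
    (hmin : ∀ y : Fin n → ZMod 2, y ≠ 0 → H.mulVec y = 0 → wt x ≤ wt y)
    (H' : Matrix (Fin r) {i : Fin n // x i ≠ 0} (ZMod 2))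
    (hH' : ∀ (i : Fin r) (s : {i : Fin n // x i ≠ 0}), H' i s = H i s.val) :
    {v : {i : Fin n // x i ≠ 0} → ZMod 2 | H'.mulVec v = 0} =
      {0, fun _ => 1} := by
  have two : ∀ a : ZMod 2, a ≠ 0 → a = 1 := by decide
  ext v
  simp only [Set.mem_setOf_eq, Set.mem_insert_iff, Set.mem_singleton_iff]
  constructor
  · intro hv
    set w : Fin n → ZMod 2 := fun i => if h : x i ≠ 0 then v ⟨i, h⟩ else 0 with hwdef
    have hsum : ∀ j : Fin r, H.mulVec w j = H'.mulVec v j := by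
      intro j
      simp only [Matrix.mulVec, dotProduct]
      rw [← Finset.sum_filter_add_sum_filter_not Finset.univ (fun i => x i ≠ 0)]
      have h2 : ∑ i ∈ Finset.univ.filter (fun i => ¬ x i ≠ 0), H j i * w i = 0 := by
        apply Finset.sum_eq_zero
        intro i hi
        simp only [Finset.mem_filter] at hi
        simp [hwdef, hi.2]
      rw [h2, add_zero]
      rw [Finset.sum_subtype (p := fun i => x i ≠ 0) (Finset.univ.filter (fun i => x i ≠ 0))
        (by simp) (fun i => H j i * w i)]
      apply Finset.sum_congr rfl
      intro s _
      simp [hwdef, s.2, hH']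
    have hwker : H.mulVec w = 0 := by
      funext j; rw [hsum j, hv]
    by_contra hcon
    push_neg at hcon
    obtain ⟨hv0, hv1⟩ := hcon
    -- v ≠ 0 : some coordinate nonzero
    have hvs : ∃ s, v s ≠ 0 := by
      by_contra h; push_neg at h; exact hv0 (funext h)
    obtain ⟨s, hs⟩ := hvs
    -- v ≠ 1 : some coordinate zero
    have hvt : ∃ t, v t = 0 := by
      by_contra h; push_neg at h
      exact hv1 (funext fun t => two _ (h t))
    obtain ⟨t, ht⟩ := hvt
    have hw0 : w ≠ 0 := by
      intro h
      apply hs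
      have := congrFun h s.val
      simpa [hwdef, s.2] using this
    have hle := hmin w hw0 hwker
    -- but wt w < wt x : supp w ⊊ supp x
    have hss : (Finset.univ.filter fun i => w i ≠ 0) ⊂
        (Finset.univ.filter fun i => x i ≠ 0) := by
      constructor
      · intro i hi
        simp only [Finset.mem_filter, Finset.mem_univ, true_and] at *
        intro hxi
        exact hi (dif_neg (not_not_intro hxi))
      · intro hsub
        have : t.val ∈ Finset.univ.filter fun i => w i ≠ 0 := by
          apply hsub; simp [t.2]
        simp only [Finset.mem_filter, Finset.mem_univ, true_and] at this
        apply this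
        simp [hwdef, t.2, ht]
    have := Finset.card_lt_card hss
    unfold wt at hle
    omega
  · rintro (rfl | rfl)
    · simp [Matrix.mulVec_zero]
    · funext j
      have : H'.mulVec (fun _ => 1) j = H.mulVec x j := by
        simp only [Matrix.mulVec, dotProduct, mul_one]
        rw [show (∑ i, H j i * x i) =
            ∑ i ∈ Finset.univ.filter (fun i => x i ≠ 0), H j i * x i by
          rw [eq_comm]
          apply Finset.sum_subset (Finset.filter_subset _ _)
          intro i _ hi
          simp only [Finset.mem_filter, Finset.mem_univ, true_and, not_not] at hi
          simp [hi]]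
        rw [Finset.sum_subtype (p := fun i => x i ≠ 0) (Finset.univ.filter (fun i => x i ≠ 0))
          (by simp) (fun i => H j i * x i)]
        apply Finset.sum_congr rfl
        intro s _
        rw [hH', two _ s.2, mul_one]
      rw [this, hxker]
end

section
/- (Proposition: the non-degenerate ancilla patch encodes one logical qubit.) Let H_Ā ∈ F₂^{r_Ā × m_A} and H_B̄ ∈ F₂^{r_B̄ × m_B} satisfy ker H_Ā = {0, 𝟙}, ker H_B̄ = {0, 𝟙}, and ker (H_B̄)ᵀ = {0}. Then the hypergraph product code of (H_Ā, H_B̄), with check matrices H_X and H_Z, encodes exactly one logical qubit: (m_A·m_B + r_Ā·r_B̄) − rank(H_X) − rank(H_Z) = 1. -/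
/-- The `Z`-check matrix of the hypergraph product code of `(H_A, H_B)`. Rows are indexed by
`[r_A] × [n_B]`; columns by the qubits `VV ⊕ CC = ([n_A] × [n_B]) ⊕ ([r_A] × [r_B])`. -/
def hgpZ {rA nA rB nB : ℕ} (HA : Matrix (Fin rA) (Fin nA) (ZMod 2))
    (HB : Matrix (Fin rB) (Fin nB) (ZMod 2)) :
    Matrix (Fin rA × Fin nB) ((Fin nA × Fin nB) ⊕ (Fin rA × Fin rB)) (ZMod 2) :=
  Matrix.of fun p q =>
    match q with
    | Sum.inl kl => if p.2 = kl.2 then HA p.1 kl.1 else 0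
    | Sum.inr kl => if p.1 = kl.1 then HB kl.2 p.2 else 0

/-- The `X`-check matrix of the hypergraph product code of `(H_A, H_B)`. Rows are indexed by
`[n_A] × [r_B]`. -/
def hgpX {rA nA rB nB : ℕ} (HA : Matrix (Fin rA) (Fin nA) (ZMod 2))
    (HB : Matrix (Fin rB) (Fin nB) (ZMod 2)) :
    Matrix (Fin nA × Fin rB) ((Fin nA × Fin nB) ⊕ (Fin rA × Fin rB)) (ZMod 2) :=
  Matrix.of fun p q =>
    match q with
    | Sum.inl kl => if p.1 = kl.1 then HB p.2 kl.2 else 0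
    | Sum.inr kl => if p.2 = kl.2 then HA kl.1 p.1 else 0

open Matrix Module

/-- Rank-nullity for matrices over `ZMod 2`. -/
private lemma rank_add_finrank_ker' {m n : Type} [Fintype m] [Fintype n]
    (M : Matrix m n (ZMod 2)) :
    M.rank + finrank (ZMod 2) (LinearMap.ker M.mulVecLin) = Fintype.card n := by
  rw [Matrix.rank, LinearMap.finrank_range_add_finrank_ker,
    Module.finrank_fintype_fun_eq_card]

/-- If the kernel of `M` as a set is `{0, 𝟙}` with `n > 0`, the kernel has dimension `1`. -/
private lemma finrank_ker_one' {r n : ℕ} (hn : 0 < n)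
    (M : Matrix (Fin r) (Fin n) (ZMod 2))
    (hker : {v : Fin n → ZMod 2 | M.mulVec v = 0} = {0, fun _ => 1}) :
    finrank (ZMod 2) (LinearMap.ker M.mulVecLin) = 1 := by
  have hone : M.mulVec (fun _ => 1) = 0 := by
    have : (fun _ => (1:ZMod 2)) ∈ {v : Fin n → ZMod 2 | M.mulVec v = 0} := by
      rw [hker]; right; rfl
    exact this
  have hker' : LinearMap.ker M.mulVecLin
      = Submodule.span (ZMod 2) {(fun _ => 1 : Fin n → ZMod 2)} := by
    ext v
    simp only [LinearMap.mem_ker, Matrix.mulVecLin_apply, Submodule.mem_span_singleton]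
    constructor
    · intro hv
      have hv' : v ∈ ({0, fun _ => 1} : Set (Fin n → ZMod 2)) := by rw [← hker]; exact hv
      rcases hv' with h | h
      · exact ⟨0, by simp [h]⟩
      · exact ⟨1, by rw [one_smul]; exact h.symm⟩
    · rintro ⟨c, rfl⟩
      rw [Matrix.mulVec_smul, hone, smul_zero]
  rw [hker']
  exact finrank_span_singleton (by
    intro h
    have := congrFun h ⟨0, hn⟩
    simp at this)

private lemma hgpX_transpose_ker {rAbar mA rBbar mB : ℕ}
    (HAbar : Matrix (Fin rAbar) (Fin mA) (ZMod 2))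
    (HBbar : Matrix (Fin rBbar) (Fin mB) (ZMod 2))
    (hkerBT : {v : Fin rBbar → ZMod 2 | HBbar.transpose.mulVec v = 0} = {0}) :
    LinearMap.ker (hgpX HAbar HBbar).transpose.mulVecLin = ⊥ := by
  rw [LinearMap.ker_eq_bot']
  intro z hz
  funext p
  obtain ⟨k, j⟩ := p
  have hrow : (fun j => z (k, j)) ∈ {v : Fin rBbar → ZMod 2 | HBbar.transpose.mulVec v = 0} := by
    show HBbar.transpose.mulVec (fun j => z (k, j)) = 0
    funext l
    have := congrFun hz (Sum.inl (k, l))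
    simp only [Matrix.mulVecLin_apply, Pi.zero_apply] at this ⊢
    rw [← this]
    simp only [Matrix.mulVec, dotProduct, Matrix.transpose_apply, hgpX, Matrix.of_apply]
    rw [Fintype.sum_prod_type]
    simp [Finset.sum_ite_eq', ite_mul, mul_comm]
  rw [hkerBT] at hrow
  exact congrFun hrow j

private lemma hgpZ_transpose_ker {rAbar mA rBbar mB : ℕ} (hmB : 0 < mB)
    (HAbar : Matrix (Fin rAbar) (Fin mA) (ZMod 2))
    (HBbar : Matrix (Fin rBbar) (Fin mB) (ZMod 2))
    (hkerB : {v : Fin mB → ZMod 2 | HBbar.mulVec v = 0} = {0, fun _ => 1}) :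
    LinearMap.ker (hgpZ HAbar HBbar).transpose.mulVecLin
      = (LinearMap.ker HAbar.transpose.mulVecLin).map
        (LinearMap.funLeft (ZMod 2) (ZMod 2) (Prod.fst : Fin rAbar × Fin mB → Fin rAbar)) := by
  have honeB : HBbar.mulVec (fun _ => 1) = 0 := by
    have : (fun _ => (1:ZMod 2)) ∈ {v : Fin mB → ZMod 2 | HBbar.mulVec v = 0} := by
      rw [hkerB]; right; rfl
    exact this
  ext z
  simp only [LinearMap.mem_ker, Submodule.mem_map, Matrix.mulVecLin_apply]
  constructor
  · intro hz
    have hrow : ∀ k, (fun j => z (k, j)) ∈ ({0, fun _ => 1} : Set (Fin mB → ZMod 2)) := by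
      intro k
      rw [← hkerB]
      show HBbar.mulVec _ = 0
      funext l
      have := congrFun hz (Sum.inr (k, l))
      simp only [Pi.zero_apply] at this ⊢
      rw [← this]
      simp only [Matrix.mulVec, dotProduct, Matrix.transpose_apply, hgpZ, Matrix.of_apply]
      rw [Fintype.sum_prod_type]
      simp [Finset.sum_ite_eq', ite_mul, mul_comm]
    have hconst : ∀ k j, z (k, j) = z (k, ⟨0, hmB⟩) := by
      intro k j
      rcases hrow k with h | h
      · rw [congrFun h j, congrFun h ⟨0, hmB⟩]; rfl
      · rw [congrFun h j, congrFun h ⟨0, hmB⟩]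
    refine ⟨fun k => z (k, ⟨0, hmB⟩), ?_, ?_⟩
    · funext k
      have := congrFun hz (Sum.inl (k, ⟨0, hmB⟩))
      simp only [Pi.zero_apply] at this ⊢
      rw [← this]
      simp only [Matrix.mulVec, dotProduct, Matrix.transpose_apply, hgpZ, Matrix.of_apply]
      rw [Fintype.sum_prod_type]
      simp [Finset.sum_ite_eq', mul_ite, ite_mul, mul_comm]
    · funext p
      exact (hconst p.1 p.2).symm
  · rintro ⟨c, hc, rfl⟩
    funext q
    simp only [Pi.zero_apply]
    rcases q with ⟨k, l⟩ | ⟨k, l⟩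
    · have := congrFun hc k
      simp only [Pi.zero_apply] at this
      rw [← this]
      simp only [Matrix.mulVec, dotProduct, Matrix.transpose_apply, hgpZ, Matrix.of_apply,
        LinearMap.funLeft_apply]
      rw [Fintype.sum_prod_type]
      simp [Finset.sum_ite_eq', ite_mul, mul_comm]
    · simp only [Matrix.mulVec, dotProduct, Matrix.transpose_apply, hgpZ, Matrix.of_apply,
        LinearMap.funLeft_apply]
      rw [Fintype.sum_prod_type]
      have hsum : ∀ i : Fin rAbar, ∑ j : Fin mB,
          (if i = k then HBbar l j else 0) * c i = if i = k then (∑ j, HBbar l j) * c i else 0 := by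
        intro i
        split <;> simp [Finset.sum_mul]
      rw [Finset.sum_congr rfl fun i _ => hsum i, Finset.sum_ite_eq' Finset.univ k]
      have h0 : (∑ j, HBbar l j) = 0 := by
        have := congrFun honeB l
        simpa [Matrix.mulVec, dotProduct] using this
      simp [h0]

/-- The non-degenerate ancilla patch encodes exactly one logical qubit:
if `ker H_Ā = {0, 𝟙}`, `ker H_B̄ = {0, 𝟙}` and `ker H_B̄ᵀ = {0}`, the hypergraph product code
of `(H_Ā, H_B̄)` has `(m_A m_B + r_Ā r_B̄) − rank H_X − rank H_Z = 1`. -/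
theorem ancilla_patch_one_logical_qubit
    {rAbar mA rBbar mB : ℕ} (hmA : 0 < mA) (hmB : 0 < mB)
    (HAbar : Matrix (Fin rAbar) (Fin mA) (ZMod 2))
    (HBbar : Matrix (Fin rBbar) (Fin mB) (ZMod 2))
    (hkerA : {v : Fin mA → ZMod 2 | HAbar.mulVec v = 0} = {0, fun _ => 1})
    (hkerB : {v : Fin mB → ZMod 2 | HBbar.mulVec v = 0} = {0, fun _ => 1})
    (hkerBT : {v : Fin rBbar → ZMod 2 | HBbar.transpose.mulVec v = 0} = {0}) :
    (mA * mB + rAbar * rBbar) - (hgpX HAbar HBbar).rank - (hgpZ HAbar HBbar).rank = 1 := by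
  -- ranks of the classical matrices
  have hA1 : HAbar.rank + 1 = mA := by
    have := rank_add_finrank_ker' HAbar
    rw [finrank_ker_one' hmA HAbar hkerA] at this
    simpa using this
  have hB1 : HBbar.rank + 1 = mB := by
    have := rank_add_finrank_ker' HBbar
    rw [finrank_ker_one' hmB HBbar hkerB] at this
    simpa using this
  have hBT : HBbar.rank = rBbar := by
    have h := rank_add_finrank_ker' HBbar.transpose
    have hk : LinearMap.ker HBbar.transpose.mulVecLin = ⊥ := by
      rw [LinearMap.ker_eq_bot']
      intro v hv
      have : v ∈ {v : Fin rBbar → ZMod 2 | HBbar.transpose.mulVec v = 0} := hv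
      rw [hkerBT] at this
      exact this
    rw [hk, finrank_bot, Matrix.rank_transpose] at h
    simpa using h
  set d := finrank (ZMod 2) (LinearMap.ker HAbar.transpose.mulVecLin) with hd
  have hAT : HAbar.rank + d = rAbar := by
    have h := rank_add_finrank_ker' HAbar.transpose
    rw [Matrix.rank_transpose] at h
    simpa using h
  -- rank of H_X
  have hX : (hgpX HAbar HBbar).rank = mA * rBbar := by
    have h := rank_add_finrank_ker' (hgpX HAbar HBbar).transpose
    rw [hgpX_transpose_ker HAbar HBbar hkerBT, finrank_bot, Matrix.rank_transpose] at h
    simpa using h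
  -- rank of H_Z
  have hZ : (hgpZ HAbar HBbar).rank + d = rAbar * mB := by
    have h := rank_add_finrank_ker' (hgpZ HAbar HBbar).transpose
    rw [hgpZ_transpose_ker hmB HAbar HBbar hkerB, Matrix.rank_transpose] at h
    have hinj : Function.Injective
        (LinearMap.funLeft (ZMod 2) (ZMod 2) (Prod.fst : Fin rAbar × Fin mB → Fin rAbar)) :=
      LinearMap.funLeft_injective_of_surjective (ZMod 2) (ZMod 2) _
        (fun i => ⟨(i, ⟨0, hmB⟩), rfl⟩)
    have hmapfr : finrank (ZMod 2)
        ((LinearMap.ker HAbar.transpose.mulVecLin).map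
          (LinearMap.funLeft (ZMod 2) (ZMod 2) (Prod.fst : Fin rAbar × Fin mB → Fin rAbar)))
        = d := by
      exact (LinearEquiv.finrank_eq
        (Submodule.equivMapOfInjective _ hinj (LinearMap.ker HAbar.transpose.mulVecLin))).symm
    rw [hmapfr] at h
    simpa using h
  -- arithmetic
  obtain ⟨r, hr⟩ : ∃ r, HAbar.rank = r := ⟨_, rfl⟩
  rw [hr] at hA1 hAT
  obtain ⟨X, hXg⟩ : ∃ X, (hgpX HAbar HBbar).rank = X := ⟨_, rfl⟩
  obtain ⟨Z, hZg⟩ : ∃ Z, (hgpZ HAbar HBbar).rank = Z := ⟨_, rfl⟩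
  rw [hXg] at hX
  rw [hZg] at hZ
  rw [hXg, hZg]
  have hmB' : rBbar + 1 = mB := by omega
  rw [← hA1] at hX
  rw [← hmB', ← hAT] at hZ
  rw [← hA1, ← hmB', ← hAT]
  have hZ' : Z = r * rBbar + r + d * rBbar := by
    have e : (r + d) * (rBbar + 1) = (r * rBbar + r + d * rBbar) + d := by ring
    rw [e] at hZ
    exact Nat.add_right_cancel hZ
  rw [hX, hZ']
  have key : (r + 1) * (rBbar + 1) + (r + d) * rBbar
      = (r + 1) * rBbar + ((r * rBbar + r + d * rBbar) + 1) := by ring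
  rw [key, Nat.add_sub_cancel_left]
  -- (B+1) - B = 1
  simp
end

section
/- (Proposition: distance of the non-degenerate ancilla patch.) Let H_Ā ∈ F₂^{r_Ā × m_A} and H_B̄ ∈ F₂^{r_B̄ × m_B} satisfy ker H_Ā = {0, 𝟙}, ker H_B̄ = {0, 𝟙}, and ker (H_B̄)ᵀ = {0}, and consider the hypergraph product code of (H_Ā, H_B̄). Then: (a) every nontrivial X-type logical operator has Hamming weight at least min(m_A, m_B), and every nontrivial Z-type logical operator has Hamming weight at least min(m_A, m_B); (b) there exists a nontrivial X-type logical operator of weight exactly m_A (supported on a column of VV) and a nontrivial Z-type logical operator of weight exactly m_B (supported on a row of VV). Hence the minimum weight over all nontrivial X- and Z-type logical operators equals min(m_A, m_B), i.e., the code distance is min(m_A, m_B). -/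
/-- The `F₂`-row space of a matrix. -/
def rowSpan {m n : Type} [Fintype m] [Fintype n] (H : Matrix m n (ZMod 2)) :
    Submodule (ZMod 2) (n → ZMod 2) :=
  Submodule.span (ZMod 2) (Set.range fun i => fun j => H i j)

/-- The indicator vector of the `ℓ`-th column of `VV` (zero on `CC`). -/
def colVV {nA nB rA rB : ℕ} (ℓ : Fin nB) :
    (Fin nA × Fin nB) ⊕ (Fin rA × Fin rB) → ZMod 2
  | Sum.inl kl => if kl.2 = ℓ then 1 else 0
  | Sum.inr _ => 0

/-- The indicator vector of the `k`-th row of `VV` (zero on `CC`). -/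
def rowVV {nA nB rA rB : ℕ} (k : Fin nA) :
    (Fin nA × Fin nB) ⊕ (Fin rA × Fin rB) → ZMod 2
  | Sum.inl kl => if kl.1 = k then 1 else 0
  | Sum.inr _ => 0

/-!
Write a qubit vector `v` as the pair `(V, C)` of its VV and CC blocks. For an `X`-type
operator the `Z`-checks read `H_A V = C H_B`; applying both sides to `𝟙` and using
`H_B 𝟙 = 0` gives `H_A (V 𝟙) = 0`, so the row sums `V 𝟙` are `0` or `𝟙`. If they are `𝟙`,
every row of `V` is nonzero and `wt v ≥ m_A`. If they are `0`, every row of `V` lies in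
`(ker H_B)^⊥`, the row space of `H_B`, so `V = M H_B`; since `ker H_Bᵀ = 0`, `H_B` has a right
inverse `Q`, which forces `C = C H_B Q = H_A M`, and `v` is a stabiliser. `Z`-type operators
are handled in the same way with column sums. Stabilisers have even row sums in `V` (for `X`)
and even column sums (for `Z`), while a column (row) of VV does not, which makes those
logicals nontrivial.
-/

open Matrix Finset

namespace Matrix

section KerEqZeroOne

variable {R m n : Type*} [Semiring R] [Fintype n] {H : Matrix m n R}

theorem mulVec_one_of_ker_eq (hker : {v : n → R | H *ᵥ v = 0} = {0, fun _ => 1}) :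
    H *ᵥ (fun _ => 1) = 0 := by
  show (fun _ => (1 : R)) ∈ {v : n → R | H *ᵥ v = 0}
  exact hker ▸ Or.inr rfl

theorem eq_zero_or_eq_one_of_ker_eq (hker : {v : n → R | H *ᵥ v = 0} = {0, fun _ => 1})
    {x : n → R} (hx : H *ᵥ x = 0) : x = 0 ∨ x = fun _ => 1 :=
  (Set.ext_iff.1 hker x).1 hx

end KerEqZeroOne

variable {K l m n : Type*} [Field K] [Fintype m] [Fintype n]

theorem exists_vecMul_eq_of_ker_le (H : Matrix m n K) (u : n → K)
    (hu : ∀ x, H *ᵥ x = 0 → u ⬝ᵥ x = 0) : ∃ c, c ᵥ* H = u := by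
  classical
  obtain ⟨ψ, hψ⟩ : dotProductBilin K K u ∈ LinearMap.range H.mulVecLin.dualMap := by
    rw [LinearMap.range_dualMap_eq_dualAnnihilator_ker, Submodule.mem_dualAnnihilator]
    exact hu
  refine ⟨fun i => ψ fun j => if i = j then 1 else 0, funext fun j => ?_⟩
  have := LinearMap.congr_fun hψ (Pi.single j 1)
  rw [LinearMap.dualMap_apply, LinearMap.pi_apply_eq_sum_univ ψ] at this
  simpa [vecMul, dotProduct, mul_comm, Pi.single_apply] using this

theorem exists_mul_eq_of_ker_le (H : Matrix m n K) (V : Matrix l n K)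
    (hV : ∀ x, H *ᵥ x = 0 → V *ᵥ x = 0) : ∃ M : Matrix l m K, M * H = V := by
  choose M hM using fun k => exists_vecMul_eq_of_ker_le H (V k) fun x hx => congrFun (hV x hx) k
  exact ⟨M, ext fun k j => congrFun (hM k) j⟩

theorem exists_mul_eq_of_ker_eq {H : Matrix m n K}
    (hker : {v : n → K | H *ᵥ v = 0} = {0, fun _ => 1}) {V : Matrix l n K}
    (hV : V *ᵥ (fun _ => 1) = 0) : ∃ M : Matrix l m K, M * H = V :=
  exists_mul_eq_of_ker_le H V fun x hx => by
    rcases eq_zero_or_eq_one_of_ker_eq hker hx with rfl | rfl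
    exacts [mulVec_zero V, hV]

theorem exists_mul_eq_one_of_ker_transpose_eq [DecidableEq m] (H : Matrix m n K)
    (hker : {v : m → K | Hᵀ *ᵥ v = 0} = {0}) : ∃ Q : Matrix n m K, H * Q = 1 := by
  obtain ⟨M, hM⟩ := exists_mul_eq_of_ker_le Hᵀ (1 : Matrix m m K) fun x hx => by
    rw [(Set.ext_iff.1 hker x).1 hx, mulVec_zero]
  exact ⟨Mᵀ, by simpa using congrArg transpose hM⟩

end Matrix

theorem card_le_wt_of_injective {ι κ : Type} [Fintype ι] [Fintype κ] {v : ι → ZMod 2}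
    {g : κ → ι} (hg : Function.Injective g) (hv : ∀ k, v (g k) ≠ 0) :
    Fintype.card κ ≤ wt v := by
  rw [wt, ← card_univ, ← card_map ⟨g, hg⟩]
  exact card_le_card fun i hi => by
    obtain ⟨k, -, rfl⟩ := mem_map.1 hi
    simpa using hv k

theorem mem_rowSpan_iff {m n : Type} [Fintype m] [Fintype n] {H : Matrix m n (ZMod 2)}
    {v : n → ZMod 2} : v ∈ rowSpan H ↔ ∃ c, c ᵥ* H = v := by
  change v ∈ Submodule.span _ (Set.range H.row) ↔ _
  rw [← range_vecMulLinear]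
  rfl

namespace HGP

variable {rA nA rB nB : ℕ} {HA : Matrix (Fin rA) (Fin nA) (ZMod 2)}
  {HB : Matrix (Fin rB) (Fin nB) (ZMod 2)}

abbrev Qubit (nA nB rA rB : ℕ) := (Fin nA × Fin nB) ⊕ (Fin rA × Fin rB)

def vvBlock (v : Qubit nA nB rA rB → ZMod 2) : Matrix (Fin nA) (Fin nB) (ZMod 2) :=
  of fun k l => v (.inl (k, l))

def ccBlock (v : Qubit nA nB rA rB → ZMod 2) : Matrix (Fin rA) (Fin rB) (ZMod 2) :=
  of fun i j => v (.inr (i, j))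

theorem ext_blocks {v w : Qubit nA nB rA rB → ZMod 2} (hvv : vvBlock v = vvBlock w)
    (hcc : ccBlock v = ccBlock w) : v = w := by
  funext q
  rcases q with ⟨k, l⟩ | ⟨i, j⟩
  exacts [congrFun₂ hvv k l, congrFun₂ hcc i j]

theorem hgpZ_mulVec_apply (v : Qubit nA nB rA rB → ZMod 2) (i : Fin rA) (j : Fin nB) :
    (hgpZ HA HB *ᵥ v) (i, j) = (HA * vvBlock v) i j + (ccBlock v * HB) i j := by
  simp [mulVec, dotProduct, hgpZ, vvBlock, ccBlock, mul_apply, Fintype.sum_prod_type,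
    mul_comm]

theorem hgpX_mulVec_apply (v : Qubit nA nB rA rB → ZMod 2) (i : Fin nA) (j : Fin rB) :
    (hgpX HA HB *ᵥ v) (i, j) = (vvBlock v * HBᵀ) i j + (HAᵀ * ccBlock v) i j := by
  simp [mulVec, dotProduct, hgpX, vvBlock, ccBlock, mul_apply, Fintype.sum_prod_type,
    mul_comm]

theorem hgpZ_mulVec_eq_zero_iff {v : Qubit nA nB rA rB → ZMod 2} :
    hgpZ HA HB *ᵥ v = 0 ↔ HA * vvBlock v = ccBlock v * HB := by
  simp only [funext_iff, Prod.forall, ← Matrix.ext_iff, hgpZ_mulVec_apply, Pi.zero_apply,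
    CharTwo.add_eq_zero]

theorem hgpX_mulVec_eq_zero_iff {v : Qubit nA nB rA rB → ZMod 2} :
    hgpX HA HB *ᵥ v = 0 ↔ vvBlock v * HBᵀ = HAᵀ * ccBlock v := by
  simp only [funext_iff, Prod.forall, ← Matrix.ext_iff, hgpX_mulVec_apply, Pi.zero_apply,
    CharTwo.add_eq_zero]

theorem vvBlock_vecMul_hgpX (c : Fin nA × Fin rB → ZMod 2) :
    vvBlock (c ᵥ* hgpX HA HB) = of (Function.curry c) * HB := by
  ext k l
  simp [vecMul, dotProduct, hgpX, vvBlock, mul_apply, Fintype.sum_prod_type]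

theorem ccBlock_vecMul_hgpX (c : Fin nA × Fin rB → ZMod 2) :
    ccBlock (c ᵥ* hgpX HA HB) = HA * of (Function.curry c) := by
  ext i j
  simp [vecMul, dotProduct, hgpX, ccBlock, mul_apply, Fintype.sum_prod_type, mul_comm]

theorem vvBlock_vecMul_hgpZ (c : Fin rA × Fin nB → ZMod 2) :
    vvBlock (c ᵥ* hgpZ HA HB) = HAᵀ * of (Function.curry c) := by
  ext k l
  simp [vecMul, dotProduct, hgpZ, vvBlock, mul_apply, Fintype.sum_prod_type, mul_comm]

theorem ccBlock_vecMul_hgpZ (c : Fin rA × Fin nB → ZMod 2) :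
    ccBlock (c ᵥ* hgpZ HA HB) = of (Function.curry c) * HBᵀ := by
  ext i j
  simp [vecMul, dotProduct, hgpZ, ccBlock, mul_apply, Fintype.sum_prod_type]

theorem mem_rowSpan_hgpX_iff {v : Qubit nA nB rA rB → ZMod 2} :
    v ∈ rowSpan (hgpX HA HB) ↔
      ∃ M : Matrix (Fin nA) (Fin rB) (ZMod 2), M * HB = vvBlock v ∧ HA * M = ccBlock v := by
  rw [mem_rowSpan_iff]
  constructor
  · rintro ⟨c, rfl⟩
    exact ⟨_, (vvBlock_vecMul_hgpX c).symm, (ccBlock_vecMul_hgpX c).symm⟩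
  · rintro ⟨M, hvv, hcc⟩
    exact ⟨fun p => M p.1 p.2, ext_blocks (vvBlock_vecMul_hgpX _ ▸ hvv)
      (ccBlock_vecMul_hgpX _ ▸ hcc)⟩

theorem mem_rowSpan_hgpZ_iff {v : Qubit nA nB rA rB → ZMod 2} :
    v ∈ rowSpan (hgpZ HA HB) ↔ ∃ N : Matrix (Fin rA) (Fin nB) (ZMod 2),
      HAᵀ * N = vvBlock v ∧ N * HBᵀ = ccBlock v := by
  rw [mem_rowSpan_iff]
  constructor
  · rintro ⟨c, rfl⟩
    exact ⟨_, (vvBlock_vecMul_hgpZ c).symm, (ccBlock_vecMul_hgpZ c).symm⟩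
  · rintro ⟨N, hvv, hcc⟩
    exact ⟨fun p => N p.1 p.2, ext_blocks (vvBlock_vecMul_hgpZ _ ▸ hvv)
      (ccBlock_vecMul_hgpZ _ ▸ hcc)⟩

theorem le_wt_of_rows_ne_zero {v : Qubit nA nB rA rB → ZMod 2} (h : ∀ k, vvBlock v k ≠ 0) :
    nA ≤ wt v := by
  choose l hl using fun k => Function.ne_iff.1 (h k)
  simpa using card_le_wt_of_injective (v := v) (g := fun k => .inl (k, l k))
    (fun a b hab => (Prod.ext_iff.1 (Sum.inl_injective hab)).1) hl

theorem le_wt_of_cols_ne_zero {v : Qubit nA nB rA rB → ZMod 2}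
    (h : ∀ l, (vvBlock v)ᵀ l ≠ 0) : nB ≤ wt v := by
  choose k hk using fun l => Function.ne_iff.1 (h l)
  simpa using card_le_wt_of_injective (v := v) (g := fun l => .inl (k l, l))
    (fun a b hab => (Prod.ext_iff.1 (Sum.inl_injective hab)).2) hk

theorem le_wt_of_hgpZ_mulVec_eq_zero
    (hkerA : {x : Fin nA → ZMod 2 | HA *ᵥ x = 0} = {0, fun _ => 1})
    (hkerB : {x : Fin nB → ZMod 2 | HB *ᵥ x = 0} = {0, fun _ => 1})
    (hkerBT : {x : Fin rB → ZMod 2 | HBᵀ *ᵥ x = 0} = {0})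
    {v : Qubit nA nB rA rB → ZMod 2} (hZ : hgpZ HA HB *ᵥ v = 0)
    (hv : v ∉ rowSpan (hgpX HA HB)) : nA ≤ wt v := by
  rw [hgpZ_mulVec_eq_zero_iff] at hZ
  have hrowSums : HA *ᵥ (vvBlock v *ᵥ fun _ => 1) = 0 := by
    rw [mulVec_mulVec, hZ, ← mulVec_mulVec, mulVec_one_of_ker_eq hkerB, mulVec_zero]
  rcases eq_zero_or_eq_one_of_ker_eq hkerA hrowSums with h0 | h1
  · obtain ⟨M, hM⟩ := exists_mul_eq_of_ker_eq hkerB h0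
    obtain ⟨Q, hQ⟩ := exists_mul_eq_one_of_ker_transpose_eq HB hkerBT
    refine absurd (mem_rowSpan_hgpX_iff.2 ⟨M, hM, ?_⟩) hv
    calc HA * M = HA * M * HB * Q := by rw [Matrix.mul_assoc _ HB, hQ, Matrix.mul_one]
      _ = ccBlock v * HB * Q := by rw [Matrix.mul_assoc HA, hM, hZ]
      _ = ccBlock v := by rw [Matrix.mul_assoc, hQ, Matrix.mul_one]
  · refine le_wt_of_rows_ne_zero fun k hk => zero_ne_one (α := ZMod 2) ?_
    calc (0 : ZMod 2) = vvBlock v k ⬝ᵥ fun _ => 1 := by rw [hk, zero_dotProduct]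
      _ = 1 := congrFun h1 k

theorem le_wt_of_hgpX_mulVec_eq_zero
    (hkerA : {x : Fin nA → ZMod 2 | HA *ᵥ x = 0} = {0, fun _ => 1})
    (hkerB : {x : Fin nB → ZMod 2 | HB *ᵥ x = 0} = {0, fun _ => 1})
    (hkerBT : {x : Fin rB → ZMod 2 | HBᵀ *ᵥ x = 0} = {0})
    {v : Qubit nA nB rA rB → ZMod 2} (hX : hgpX HA HB *ᵥ v = 0)
    (hv : v ∉ rowSpan (hgpZ HA HB)) : nB ≤ wt v := by
  rw [hgpX_mulVec_eq_zero_iff] at hX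
  have hcolSums : HB *ᵥ ((vvBlock v)ᵀ *ᵥ fun _ => 1) = 0 := by
    rw [mulVec_mulVec, ← transpose_transpose HB, ← transpose_mul, hX, transpose_mul,
      transpose_transpose, ← mulVec_mulVec, mulVec_one_of_ker_eq hkerA, mulVec_zero]
  rcases eq_zero_or_eq_one_of_ker_eq hkerB hcolSums with h0 | h1
  · obtain ⟨M, hM⟩ := exists_mul_eq_of_ker_eq hkerA h0
    obtain ⟨Q, hQ⟩ := exists_mul_eq_one_of_ker_transpose_eq HB hkerBT
    have hvv : HAᵀ * Mᵀ = vvBlock v := by rw [← transpose_mul, hM, transpose_transpose]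
    have hQT : Qᵀ * HBᵀ = 1 := by rw [← transpose_mul, hQ, transpose_one]
    -- `Mᵀ` already matches the VV block; the correction term fixes the CC block and is
    -- invisible to `H_Aᵀ` because `H_Aᵀ C = V H_Bᵀ`.
    refine absurd (mem_rowSpan_hgpZ_iff.2
      ⟨Mᵀ + (ccBlock v - Mᵀ * HBᵀ) * Qᵀ, ?_, ?_⟩) hv
    · rw [Matrix.mul_add, ← Matrix.mul_assoc, Matrix.mul_sub, ← Matrix.mul_assoc, hvv, hX,
        sub_self, Matrix.zero_mul, add_zero]
    · rw [Matrix.add_mul, Matrix.mul_assoc, hQT, Matrix.mul_one, add_sub_cancel]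
  · refine le_wt_of_cols_ne_zero fun l hl => zero_ne_one (α := ZMod 2) ?_
    calc (0 : ZMod 2) = (vvBlock v)ᵀ l ⬝ᵥ fun _ => 1 := by rw [hl, zero_dotProduct]
      _ = 1 := congrFun h1 l

theorem vvBlock_colVV (ℓ : Fin nB) :
    vvBlock (colVV (nA := nA) (rA := rA) (rB := rB) ℓ) =
      vecMulVec (fun _ => 1) (Pi.single ℓ 1) := by
  ext k l
  simp [vvBlock, colVV, vecMulVec, Pi.single_apply]

theorem ccBlock_colVV (ℓ : Fin nB) : ccBlock (colVV (nA := nA) (rA := rA) (rB := rB) ℓ) = 0 :=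
  rfl

theorem vvBlock_rowVV (k : Fin nA) :
    vvBlock (rowVV (nB := nB) (rA := rA) (rB := rB) k) =
      vecMulVec (Pi.single k 1) (fun _ => 1) := by
  ext i l
  simp [vvBlock, rowVV, vecMulVec, Pi.single_apply]

theorem ccBlock_rowVV (k : Fin nA) : ccBlock (rowVV (nB := nB) (rA := rA) (rB := rB) k) = 0 :=
  rfl

theorem hgpZ_mulVec_colVV (hA : HA *ᵥ (fun _ => 1) = 0) (ℓ : Fin nB) :
    hgpZ HA HB *ᵥ colVV ℓ = 0 := by
  rw [hgpZ_mulVec_eq_zero_iff, vvBlock_colVV, ccBlock_colVV, mul_vecMulVec, hA, zero_vecMulVec,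
    Matrix.zero_mul]

theorem hgpX_mulVec_rowVV (hB : HB *ᵥ (fun _ => 1) = 0) (k : Fin nA) :
    hgpX HA HB *ᵥ rowVV k = 0 := by
  rw [hgpX_mulVec_eq_zero_iff, vvBlock_rowVV, ccBlock_rowVV, vecMulVec_mul, vecMul_transpose, hB,
    Matrix.mul_zero]
  ext
  simp [vecMulVec]

theorem colVV_notMem_rowSpan_hgpX (hnA : 0 < nA) (hB : HB *ᵥ (fun _ => 1) = 0) (ℓ : Fin nB) :
    colVV ℓ ∉ rowSpan (hgpX HA HB) := by
  rintro hmem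
  obtain ⟨M, hM, -⟩ := mem_rowSpan_hgpX_iff.1 hmem
  have := congrArg (· *ᵥ fun _ => (1 : ZMod 2)) hM
  simp only [vvBlock_colVV, ← mulVec_mulVec, hB, mulVec_zero, vecMulVec_mulVec] at this
  simpa using congrFun this ⟨0, hnA⟩

theorem rowVV_notMem_rowSpan_hgpZ (hnB : 0 < nB) (hA : HA *ᵥ (fun _ => 1) = 0) (k : Fin nA) :
    rowVV k ∉ rowSpan (hgpZ HA HB) := by
  rintro hmem
  obtain ⟨N, hN, -⟩ := mem_rowSpan_hgpZ_iff.1 hmem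
  have := congrArg (fun V => (fun _ => (1 : ZMod 2)) ᵥ* V) hN
  simp only [vvBlock_rowVV, ← vecMul_vecMul, vecMul_transpose, hA, zero_vecMul,
    vecMul_vecMulVec] at this
  simpa using congrFun this ⟨0, hnB⟩

theorem wt_colVV (ℓ : Fin nB) : wt (colVV (nA := nA) (rA := rA) (rB := rB) ℓ) = nA := by
  have : univ.filter (fun q => colVV (nA := nA) (rA := rA) (rB := rB) ℓ q ≠ 0) =
      univ.image fun k => .inl (k, ℓ) := by
    ext (⟨k, l⟩ | _) <;> simp [colVV, eq_comm]
  rw [wt, this, card_image_of_injective _ fun a b h =>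
    (Prod.ext_iff.1 (Sum.inl_injective h)).1, card_univ, Fintype.card_fin]

theorem wt_rowVV (k : Fin nA) : wt (rowVV (nB := nB) (rA := rA) (rB := rB) k) = nB := by
  have : univ.filter (fun q => rowVV (nB := nB) (rA := rA) (rB := rB) k q ≠ 0) =
      univ.image fun l => .inl (k, l) := by
    ext (⟨i, l⟩ | _) <;> simp [rowVV, eq_comm]
  rw [wt, this, card_image_of_injective _ fun a b h =>
    (Prod.ext_iff.1 (Sum.inl_injective h)).2, card_univ, Fintype.card_fin]

end HGP

/-- Distance of the non-degenerate ancilla patch: under the non-degeneracy conditions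
`ker H_Ā = {0,𝟙}`, `ker H_B̄ = {0,𝟙}`, `ker H_B̄ᵀ = {0}`, (a) every nontrivial `X`-type and
every nontrivial `Z`-type logical operator of the hypergraph product code of `(H_Ā, H_B̄)` has
weight at least `min m_A m_B`; (b) there is a nontrivial `X`-type logical of weight exactly
`m_A` supported on a column of `VV`, and a nontrivial `Z`-type logical of weight exactly `m_B`
supported on a row of `VV`; hence the code distance equals `min m_A m_B`. -/
theorem ancilla_patch_distance
    {rAbar mA rBbar mB : ℕ} (hmA : 0 < mA) (hmB : 0 < mB)
    (HAbar : Matrix (Fin rAbar) (Fin mA) (ZMod 2))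
    (HBbar : Matrix (Fin rBbar) (Fin mB) (ZMod 2))
    (hkerA : {v : Fin mA → ZMod 2 | HAbar.mulVec v = 0} = {0, fun _ => 1})
    (hkerB : {v : Fin mB → ZMod 2 | HBbar.mulVec v = 0} = {0, fun _ => 1})
    (hkerBT : {v : Fin rBbar → ZMod 2 | HBbar.transpose.mulVec v = 0} = {0}) :
    (∀ v : (Fin mA × Fin mB) ⊕ (Fin rAbar × Fin rBbar) → ZMod 2,
      (hgpZ HAbar HBbar).mulVec v = 0 → v ∉ rowSpan (hgpX HAbar HBbar) →
        min mA mB ≤ wt v) ∧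
    (∀ v : (Fin mA × Fin mB) ⊕ (Fin rAbar × Fin rBbar) → ZMod 2,
      (hgpX HAbar HBbar).mulVec v = 0 → v ∉ rowSpan (hgpZ HAbar HBbar) →
        min mA mB ≤ wt v) ∧
    (∃ ℓ : Fin mB, (hgpZ HAbar HBbar).mulVec (colVV ℓ) = 0 ∧
      (colVV (rA := rAbar) (rB := rBbar) ℓ) ∉ rowSpan (hgpX HAbar HBbar) ∧
      wt (colVV (nA := mA) (rA := rAbar) (rB := rBbar) ℓ) = mA) ∧
    (∃ k : Fin mA, (hgpX HAbar HBbar).mulVec (rowVV k) = 0 ∧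
      (rowVV (rA := rAbar) (rB := rBbar) k) ∉ rowSpan (hgpZ HAbar HBbar) ∧
      wt (rowVV (nB := mB) (rA := rAbar) (rB := rBbar) k) = mB) ∧
    IsLeast {d : ℕ | ∃ v : (Fin mA × Fin mB) ⊕ (Fin rAbar × Fin rBbar) → ZMod 2,
      (((hgpZ HAbar HBbar).mulVec v = 0 ∧ v ∉ rowSpan (hgpX HAbar HBbar)) ∨
       ((hgpX HAbar HBbar).mulVec v = 0 ∧ v ∉ rowSpan (hgpZ HAbar HBbar))) ∧ wt v = d}
      (min mA mB) := by
  have hA := mulVec_one_of_ker_eq hkerA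
  have hB := mulVec_one_of_ker_eq hkerB
  have boundX : ∀ v, hgpZ HAbar HBbar *ᵥ v = 0 → v ∉ rowSpan (hgpX HAbar HBbar) →
      min mA mB ≤ wt v := fun v hZ hv =>
    (min_le_left _ _).trans (HGP.le_wt_of_hgpZ_mulVec_eq_zero hkerA hkerB hkerBT hZ hv)
  have boundZ : ∀ v, hgpX HAbar HBbar *ᵥ v = 0 → v ∉ rowSpan (hgpZ HAbar HBbar) →
      min mA mB ≤ wt v := fun v hX hv =>
    (min_le_right _ _).trans (HGP.le_wt_of_hgpX_mulVec_eq_zero hkerA hkerB hkerBT hX hv)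
  have colLogical (ℓ : Fin mB) := And.intro (HGP.hgpZ_mulVec_colVV (HB := HBbar) hA ℓ)
    (HGP.colVV_notMem_rowSpan_hgpX (HA := HAbar) hmA hB ℓ)
  have rowLogical (k : Fin mA) := And.intro (HGP.hgpX_mulVec_rowVV (HA := HAbar) hB k)
    (HGP.rowVV_notMem_rowSpan_hgpZ (HB := HBbar) hmB hA k)
  refine ⟨boundX, boundZ, ⟨⟨0, hmB⟩, (colLogical _).1, (colLogical _).2, HGP.wt_colVV _⟩,
    ⟨⟨0, hmA⟩, (rowLogical _).1, (rowLogical _).2, HGP.wt_rowVV _⟩, ?_, ?_⟩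
  · rcases le_total mA mB with h | h
    · exact ⟨colVV ⟨0, hmB⟩, .inl (colLogical _), by rw [HGP.wt_colVV, min_eq_left h]⟩
    · exact ⟨rowVV ⟨0, hmA⟩, .inr (rowLogical _), by rw [HGP.wt_rowVV, min_eq_right h]⟩
  · rintro d ⟨v, ⟨hZ, hv⟩ | ⟨hX, hv⟩, rfl⟩
    exacts [boundX v hZ hv, boundZ v hX hv]
end

section
/- (Proposition: the merged-patch stabilizer generators mutually commute.) In the merged-patch construction, assume H_X^A (H_Z^A)ᵀ = 0. Then every merged-patch X-type stabilizer generator (families (i)–(iii)) is orthogonal to every merged-patch Z-type stabilizer generator (families (iv)–(vii)) under the standard F₂ bilinear form on F₂^M, i.e., ⟨x, z⟩ = 0 for every such pair; equivalently, the corresponding Pauli operators pairwise commute. -/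
/-- The standard bilinear form `⟨u, v⟩ = Σ_q u_q v_q` over `ZMod 2`. -/
def bform {ι : Type} [Fintype ι] (u v : ι → ZMod 2) : ZMod 2 := ∑ i, u i * v i

/-- The qubit set `M = A ⊔ C ⊔ T` of the merged patch, where `C = VV ⊔ CC` is the qubit set of
the ancilla patch (`VV = [m_A] × [m_B]`, `CC = [r_Ā] × [r_B̄]`) and `T ≅ [r_Ā]` is the set of
interface qubits. -/
abbrev MQ (A : Type) (mA mB rA' rB' : ℕ) : Type :=
  A ⊕ (Fin mA × Fin mB) ⊕ (Fin rA' × Fin rB') ⊕ Fin rA'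

/-- A vector supported on `A`, viewed in `F₂^M`. -/
def onA {A : Type} {mA mB rA' rB' : ℕ} (row : A → ZMod 2) : MQ A mA mB rA' rB' → ZMod 2
  | Sum.inl a => row a
  | _ => 0

/-- The `X`-check `s^X_{i,j}` of the ancilla patch `C` (the hypergraph product of
`(H_Ā, H_B̄)`), viewed as a vector on `M`. -/
def sXC {A : Type} {mA mB rA' rB' : ℕ} (HAbar : Matrix (Fin rA') (Fin mA) (ZMod 2))
    (HBbar : Matrix (Fin rB') (Fin mB) (ZMod 2)) (i : Fin mA) (j : Fin rB') :
    MQ A mA mB rA' rB' → ZMod 2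
  | Sum.inr (Sum.inl (k, l)) => if k = i then HBbar j l else 0
  | Sum.inr (Sum.inr (Sum.inl (k, l))) => if l = j then HAbar k i else 0
  | _ => 0

/-- The `Z`-check `s^Z_{i,j}` of the ancilla patch `C`, viewed as a vector on `M`. -/
def sZC {A : Type} {mA mB rA' rB' : ℕ} (HAbar : Matrix (Fin rA') (Fin mA) (ZMod 2))
    (HBbar : Matrix (Fin rB') (Fin mB) (ZMod 2)) (i : Fin rA') (j : Fin mB) :
    MQ A mA mB rA' rB' → ZMod 2
  | Sum.inr (Sum.inl (k, l)) => if l = j then HAbar i k else 0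
  | Sum.inr (Sum.inr (Sum.inl (k, l))) => if k = i then HBbar l j else 0
  | _ => 0

/-- The standard basis vector at interface qubit `T(i)`. -/
def eT {A : Type} {mA mB rA' rB' : ℕ} (i : Fin rA') : MQ A mA mB rA' rB' → ZMod 2
  | Sum.inr (Sum.inr (Sum.inr j)) => if j = i then 1 else 0
  | _ => 0

/-- The standard basis vector at the `VV` qubit `(k, l)`. -/
def eVV {A : Type} {mA mB rA' rB' : ℕ} (k : Fin mA) (l : Fin mB) :
    MQ A mA mB rA' rB' → ZMod 2
  | Sum.inr (Sum.inl (k', l')) => if k' = k ∧ l' = l then 1 else 0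
  | _ => 0

/-- The standard basis vector at the `A` qubit `a`. -/
def eA {A : Type} [DecidableEq A] {mA mB rA' rB' : ℕ} (a : A) :
    MQ A mA mB rA' rB' → ZMod 2
  | Sum.inl a' => if a' = a then 1 else 0
  | _ => 0

/-- The merged-patch `X`-type stabilizer generator
`S^X_{T,i} = e_{ι_Ā(i)} + e_{VV(i,ℓ)} + Σ_j H_Ā[j,i] e_{T(j)}`. -/
def SXT {A : Type} [DecidableEq A] {mA mB rA' rB' : ℕ}
    (HAbar : Matrix (Fin rA') (Fin mA) (ZMod 2)) (ιA : Fin mA → A) (ℓ : Fin mB) (i : Fin mA) :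
    MQ A mA mB rA' rB' → ZMod 2 :=
  eA (ιA i) + eVV i ℓ + ∑ j, HAbar j i • eT j

/-- The indicator of the column `{VV(i,ℓ)}_{i ∈ [m_A]}` of the ancilla patch, i.e. the
logical `X̄_C`, viewed in `F₂^M`. -/
def XbarC {A : Type} {mA mB rA' rB' : ℕ} (ℓ : Fin mB) : MQ A mA mB rA' rB' → ZMod 2
  | Sum.inr (Sum.inl (_, l)) => if l = ℓ then 1 else 0
  | _ => 0



lemma bform_expand {A : Type} [Fintype A] {mA mB rA' rB' : ℕ}
    (u v : MQ A mA mB rA' rB' → ZMod 2) :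
    bform u v = (∑ a, u (Sum.inl a) * v (Sum.inl a))
      + (∑ p : Fin mA × Fin mB, u (Sum.inr (Sum.inl p)) * v (Sum.inr (Sum.inl p)))
      + (∑ p : Fin rA' × Fin rB',
          u (Sum.inr (Sum.inr (Sum.inl p))) * v (Sum.inr (Sum.inr (Sum.inl p))))
      + (∑ t, u (Sum.inr (Sum.inr (Sum.inr t))) * v (Sum.inr (Sum.inr (Sum.inr t)))) := by
  simp [bform, Fintype.sum_sum_type, add_assoc]

/-- The merged-patch stabilizer generators mutually commute: assuming
`H_X^A (H_Z^A)ᵀ = 0` (and the merged-patch construction hypotheses relating `H_Ā`, `H_B̄` to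
the codes `A` and `B`), every merged-patch `X`-type stabilizer generator (families (i)–(iii))
is orthogonal to every merged-patch `Z`-type stabilizer generator (families (iv)–(vii)) under
the standard `F₂` bilinear form on `F₂^M`. -/
theorem merged_patch_stabilizers_commute
    {A : Type} [Fintype A] [DecidableEq A] {rXA rZA mA rA' : ℕ}
    (HXA : Matrix (Fin rXA) A (ZMod 2)) (HZA : Matrix (Fin rZA) A (ZMod 2))
    (hOrthA : HXA * HZA.transpose = 0)
    (xA : A → ZMod 2) (hxA : HZA.mulVec xA = 0)
    (ιA : Fin mA → A) (hιinj : Function.Injective ιA)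
    (hιrange : ∀ a, xA a ≠ 0 ↔ ∃ k, ιA k = a)
    (HAbar : Matrix (Fin rA') (Fin mA) (ZMod 2))
    (ρ : Fin rA' → Fin rZA) (hρinj : Function.Injective ρ)
    (hρrange : ∀ j, (∃ a, xA a ≠ 0 ∧ HZA j a ≠ 0) ↔ ∃ i, ρ i = j)
    (hHAbar : ∀ i k, HAbar i k = HZA (ρ i) (ιA k))
    {B : Type} [Fintype B] [DecidableEq B] {rXB rZB mB rB' : ℕ}
    (HXB : Matrix (Fin rXB) B (ZMod 2)) (HZB : Matrix (Fin rZB) B (ZMod 2))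
    (hOrthB : HXB * HZB.transpose = 0)
    (zB : B → ZMod 2) (hzB : HXB.mulVec zB = 0)
    (ιB : Fin mB → B) (hιBinj : Function.Injective ιB)
    (hιBrange : ∀ b, zB b ≠ 0 ↔ ∃ k, ιB k = b)
    (HBbar : Matrix (Fin rB') (Fin mB) (ZMod 2))
    (ρB : Fin rB' → Fin rXB) (hρBinj : Function.Injective ρB)
    (hρBrange : ∀ j, (∃ b, zB b ≠ 0 ∧ HXB j b ≠ 0) ↔ ∃ i, ρB i = j)
    (hHBbar : ∀ i k, HBbar i k = HXB (ρB i) (ιB k))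
    (ℓ : Fin mB) :
    ∀ x ∈ ((Set.range (SXT HAbar ιA ℓ)) ∪
        (Set.range fun i : Fin rXA => (onA (HXA i) : MQ A mA mB rA' rB' → ZMod 2)) ∪
        (Set.range fun p : Fin mA × Fin rB' => sXC HAbar HBbar p.1 p.2) :
          Set (MQ A mA mB rA' rB' → ZMod 2)),
      ∀ z ∈ ((Set.range fun i : Fin rA' => onA (HZA (ρ i)) + eT i) ∪
        (Set.range fun i : Fin rA' => sZC HAbar HBbar i ℓ + eT i) ∪
        {v | ∃ (i : Fin rA') (j : Fin mB), j ≠ ℓ ∧ v = sZC HAbar HBbar i j} ∪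
        {v | ∃ j : Fin rZA, (¬∃ a, xA a ≠ 0 ∧ HZA j a ≠ 0) ∧ v = onA (HZA j)} :
          Set (MQ A mA mB rA' rB' → ZMod 2)),
        bform x z = 0 := by
  intro x hx z hz
  have h0 : ∀ s, (∑ a, HXA · a * HZA s a : Fin rXA → ZMod 2) = 0 := by
    intro s
    funext r
    have := congrFun (congrFun hOrthA r) s
    simpa [Matrix.mul_apply, Matrix.transpose_apply] using this
  simp only [Set.mem_union, Set.mem_range, Set.mem_setOf_eq, Prod.exists] at hx hz
  rcases hx with ((⟨k, rfl⟩ | ⟨r, rfl⟩) | ⟨i0, j0, rfl⟩) <;>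
    rcases hz with (((⟨i, rfl⟩ | ⟨i, rfl⟩) | ⟨i, j, hj, rfl⟩) | ⟨j, hj, rfl⟩) <;>
    rw [bform_expand]
  · -- SXT vs (iv)
    simp [SXT, onA, eT, eVV, eA, Pi.add_apply, Finset.sum_apply, Pi.smul_apply,
      smul_eq_mul, mul_ite, ite_mul, mul_zero, zero_mul, mul_one, one_mul,
      Fintype.sum_prod_type, Finset.sum_ite_eq, Finset.sum_ite_eq',
      hHAbar, CharTwo.add_self_eq_zero]
  · -- SXT vs (v)
    simp [SXT, sZC, eT, eVV, eA, Pi.add_apply, Finset.sum_apply, Pi.smul_apply,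
      smul_eq_mul, mul_ite, ite_mul, mul_zero, zero_mul, mul_one, one_mul,
      Fintype.sum_prod_type, Finset.sum_ite_eq, Finset.sum_ite_eq',
      CharTwo.add_self_eq_zero]
  · -- SXT vs (vi)
    simp [SXT, sZC, eT, eVV, eA, Pi.add_apply, Finset.sum_apply, Pi.smul_apply,
      smul_eq_mul, mul_ite, ite_mul, mul_zero, zero_mul, mul_one, one_mul,
      Fintype.sum_prod_type, Finset.sum_ite_eq, Finset.sum_ite_eq', Ne.symm hj, hj]
  · -- SXT vs (vii)
    push_neg at hj
    have h1 : xA (ιA k) ≠ 0 := (hιrange _).mpr ⟨k, rfl⟩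
    simp [SXT, onA, eT, eVV, eA, Pi.add_apply, Finset.sum_apply, Pi.smul_apply,
      smul_eq_mul, mul_ite, ite_mul, mul_zero, zero_mul, mul_one, one_mul,
      Fintype.sum_prod_type, Finset.sum_ite_eq, Finset.sum_ite_eq', hj _ h1]
  · -- HXA vs (iv)
    have := congrFun (h0 (ρ i)) r
    simp only [Pi.zero_apply] at this
    simp [onA, eT, Pi.add_apply, mul_zero, zero_mul, mul_add, this]
  · -- HXA vs (v)
    simp [onA, sZC, eT, Pi.add_apply]
  · -- HXA vs (vi)
    simp [onA, sZC]
  · -- HXA vs (vii)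
    have := congrFun (h0 j) r
    simp only [Pi.zero_apply] at this
    simp [onA, this]
  · -- sXC vs (iv)
    simp [sXC, onA, eT, Pi.add_apply]
  · -- sXC vs (v)
    simp [sXC, sZC, eT, Pi.add_apply, mul_ite, ite_mul, mul_zero, zero_mul,
      Fintype.sum_prod_type, Finset.sum_ite_eq, Finset.sum_ite_eq',
      mul_comm, CharTwo.add_self_eq_zero]
  · -- sXC vs (vi)
    simp [sXC, sZC, mul_ite, ite_mul, mul_zero, zero_mul,
      Fintype.sum_prod_type, Finset.sum_ite_eq, Finset.sum_ite_eq',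
      mul_comm, CharTwo.add_self_eq_zero]
  · -- sXC vs (vii)
    simp [sXC, onA]
end

section
/- (Proposition: the joint logical X̄_A X̄_C lies in the merged stabilizer group.) In the merged-patch construction, since x̄_A ∈ ker H_Z^A one has 𝟙 ∈ ker H_Ā, and then Σ_{i ∈ [m_A]} S^X_{T,i} equals the vector in F₂^M that agrees with x̄_A on A (i.e., is the indicator of Ā), is the indicator of the column {VV(i,ℓ) : i ∈ [m_A]} on C, and is zero on T. In particular, the joint logical operator X̄_A X̄_C is contained in the F₂-span of the merged-patch X-type stabilizer generators. -/
/-- The joint logical `X̄_A X̄_C` lies in the merged stabilizer group: since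
`x̄_A ∈ ker H_Z^A` one has `𝟙 ∈ ker H_Ā`, the sum `Σ_i S^X_{T,i}` equals the vector of `F₂^M`
that agrees with `x̄_A` on `A`, is the indicator of the column `{VV(i,ℓ)}` on `C`, and is zero
on `T`; in particular `X̄_A X̄_C` is contained in the `F₂`-span of the merged-patch `X`-type
stabilizer generators. -/
theorem joint_logical_in_merged_stabilizer_group
    {A : Type} [Fintype A] [DecidableEq A] {rXA rZA mA rA' : ℕ}
    (HXA : Matrix (Fin rXA) A (ZMod 2)) (HZA : Matrix (Fin rZA) A (ZMod 2))
    (hOrthA : HXA * HZA.transpose = 0)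
    (xA : A → ZMod 2) (hxA : HZA.mulVec xA = 0)
    (ιA : Fin mA → A) (hιinj : Function.Injective ιA)
    (hιrange : ∀ a, xA a ≠ 0 ↔ ∃ k, ιA k = a)
    (HAbar : Matrix (Fin rA') (Fin mA) (ZMod 2))
    (ρ : Fin rA' → Fin rZA) (hρinj : Function.Injective ρ)
    (hρrange : ∀ j, (∃ a, xA a ≠ 0 ∧ HZA j a ≠ 0) ↔ ∃ i, ρ i = j)
    (hHAbar : ∀ i k, HAbar i k = HZA (ρ i) (ιA k))
    {B : Type} [Fintype B] [DecidableEq B] {rXB rZB mB rB' : ℕ}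
    (HXB : Matrix (Fin rXB) B (ZMod 2)) (HZB : Matrix (Fin rZB) B (ZMod 2))
    (hOrthB : HXB * HZB.transpose = 0)
    (zB : B → ZMod 2) (hzB : HXB.mulVec zB = 0)
    (ιB : Fin mB → B) (hιBinj : Function.Injective ιB)
    (hιBrange : ∀ b, zB b ≠ 0 ↔ ∃ k, ιB k = b)
    (HBbar : Matrix (Fin rB') (Fin mB) (ZMod 2))
    (ρB : Fin rB' → Fin rXB) (hρBinj : Function.Injective ρB)
    (hρBrange : ∀ j, (∃ b, zB b ≠ 0 ∧ HXB j b ≠ 0) ↔ ∃ i, ρB i = j)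
    (hHBbar : ∀ i k, HBbar i k = HXB (ρB i) (ιB k))
    (ℓ : Fin mB) :
    HAbar.mulVec (fun _ => 1) = 0 ∧
    (∑ i, SXT HAbar ιA ℓ i) =
      (onA xA + XbarC ℓ : MQ A mA mB rA' rB' → ZMod 2) ∧
    (onA xA + XbarC ℓ : MQ A mA mB rA' rB' → ZMod 2) ∈
      Submodule.span (ZMod 2)
        ((Set.range (SXT HAbar ιA ℓ)) ∪
          (Set.range fun i : Fin rXA => (onA (HXA i) : MQ A mA mB rA' rB' → ZMod 2)) ∪
          (Set.range fun p : Fin mA × Fin rB' => sXC HAbar HBbar p.1 p.2)) := by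

  classical
  have zmod2 : ∀ v : ZMod 2, v ≠ 0 → v = 1 := by decide
  -- Part 1
  have h1 : HAbar.mulVec (fun _ => 1) = 0 := by
    funext j
    have h0 := congrFun hxA (ρ j)
    simp only [Matrix.mulVec, dotProduct, Pi.zero_apply] at h0 ⊢
    have himg : ∑ a, HZA (ρ j) a * xA a
        = ∑ a ∈ Finset.univ.image ιA, HZA (ρ j) a * xA a := by
      symm
      apply Finset.sum_subset (Finset.subset_univ _)
      intro a _ ha
      have hnot : ¬ ∃ k, ιA k = a := by
        simpa [Finset.mem_image] using ha
      have : xA a = 0 := by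
        by_contra h
        exact hnot ((hιrange a).mp h)
      simp [this]
    rw [himg, Finset.sum_image (fun k _ k' _ h => hιinj h)] at h0
    calc ∑ k, HAbar j k * 1 = ∑ k, HZA (ρ j) (ιA k) * xA (ιA k) := by
          apply Finset.sum_congr rfl
          intro k _
          have hx : xA (ιA k) = 1 := zmod2 _ ((hιrange (ιA k)).mpr ⟨k, rfl⟩)
          rw [hHAbar, hx]
      _ = 0 := h0
  have hsumH : ∀ j : Fin rA', ∑ i, HAbar j i = 0 := by
    intro j
    have := congrFun h1 j
    simpa [Matrix.mulVec, dotProduct] using this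
  -- Part 2
  have h2 : (∑ i, SXT HAbar ιA ℓ i) =
      (onA xA + XbarC ℓ : MQ A mA mB rA' rB' → ZMod 2) := by
    funext q
    rw [Finset.sum_apply]
    rcases q with a | ⟨k, l⟩ | ⟨k, l⟩ | j
    · -- A component
      have hterm : ∀ i : Fin mA, (SXT HAbar ιA ℓ i : MQ A mA mB rA' rB' → ZMod 2) (Sum.inl a)
          = if a = ιA i then 1 else 0 := by
        intro i
        simp [SXT, eA, eVV, eT]
      simp only [hterm]
      show _ = xA a + 0
      rw [add_zero]
      by_cases h : xA a = 0
      · rw [h]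
        apply Finset.sum_eq_zero
        intro i _
        have : a ≠ ιA i := by
          intro he
          exact ((hιrange a).mpr ⟨i, he.symm⟩) h
        simp [this]
      · obtain ⟨i0, hi0⟩ := (hιrange a).mp h
        rw [zmod2 _ h]
        have : ∀ i : Fin mA, (if a = ιA i then (1 : ZMod 2) else 0)
            = if i = i0 then 1 else 0 := by
          intro i
          by_cases hi : i = i0
          · simp [hi, hi0.symm]
          · have : a ≠ ιA i := by
              intro he
              exact hi (hιinj (he.symm.trans hi0.symm))
            simp [this, hi]
        simp [this]
    · -- VV component
      have hterm : ∀ i : Fin mA, (SXT HAbar ιA ℓ i : MQ A mA mB rA' rB' → ZMod 2) (Sum.inr (Sum.inl (k, l)))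
          = if k = i ∧ l = ℓ then 1 else 0 := by
        intro i
        simp [SXT, eA, eVV, eT]
      simp only [hterm]
      show _ = 0 + XbarC ℓ (Sum.inr (Sum.inl (k, l)))
      rw [zero_add]
      by_cases hl : l = ℓ
      · simp [XbarC, hl]
      · simp [XbarC, hl]
    · -- CC component
      have hterm : ∀ i : Fin mA,
          (SXT HAbar ιA ℓ i : MQ A mA mB rA' rB' → ZMod 2) (Sum.inr (Sum.inr (Sum.inl (k, l)))) = 0 := by
        intro i
        simp [SXT, eA, eVV, eT]
      simp [hterm, onA, XbarC]
    · -- T component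
      have hterm : ∀ i : Fin mA, (SXT HAbar ιA ℓ i : MQ A mA mB rA' rB' → ZMod 2) (Sum.inr (Sum.inr (Sum.inr j)))
          = HAbar j i := by
        intro i
        simp [SXT, eA, eVV, eT]
      simp only [hterm]
      show _ = (0 : ZMod 2) + 0
      rw [add_zero]
      exact hsumH j
  refine ⟨h1, h2, ?_⟩
  rw [← h2]
  exact Submodule.sum_mem _ fun i _ =>
    Submodule.subset_span (Or.inl (Or.inl ⟨i, rfl⟩))
end

section
/- (Lemma: local greedy decoders imply confinement.) Suppose an (s₀, c)-local greedy decoder exists, i.e., for every E ∈ F₂^n × F₂^n with |E|_R ≤ s₀ there exist t ∈ ℕ and corrections C_1, …, C_t ∈ F₂^n × F₂^n with wt(C_i) ≤ c for each i, such that wt(σ(E + C_1 + ⋯ + C_i)) < wt(σ(E + C_1 + ⋯ + C_{i−1})) for each i ∈ [t], and |E + C_1 + ⋯ + C_t|_R = 0. Then the code has (s₀, 1/c)-linear confinement: for every E ∈ F₂^n × F₂^n with |E|_R ≤ s₀, one has c · wt(σ(E)) ≥ |E|_R. -/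
/-- An `n`-qubit Pauli operator modulo phase, as a pair of `F₂` vectors `(E_X, E_Z)`. -/
abbrev PauliVec (n : ℕ) := (Fin n → ZMod 2) × (Fin n → ZMod 2)

/-- Weight of a Pauli operator: the number of qubits on which it acts nontrivially. -/
def pwt {n : ℕ} (E : PauliVec n) : ℕ :=
  (Finset.univ.filter fun i => E.1 i ≠ 0 ∨ E.2 i ≠ 0).card

/-- Hamming weight of a syndrome. -/
def synWt {r : ℕ} (y : Fin r → ZMod 2) : ℕ :=
  (Finset.univ.filter fun i => y i ≠ 0).card

/-- Reduced weight with respect to a stabilizer group `S`: `|E|_R = min_{s ∈ S} wt (E + s)`. -/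
noncomputable def redWt {n : ℕ} (S : AddSubgroup (PauliVec n)) (E : PauliVec n) : ℕ :=
  sInf {w | ∃ s ∈ S, w = pwt (E + s)}

lemma pwt_zero {n : ℕ} : pwt (0 : PauliVec n) = 0 := by
  simp [pwt]

lemma pwt_neg {n : ℕ} (E : PauliVec n) : pwt (-E) = pwt E := by
  unfold pwt
  congr 1
  apply Finset.filter_congr
  intro i _
  simp [neg_ne_zero]

lemma pwt_add_le {n : ℕ} (A B : PauliVec n) : pwt (A + B) ≤ pwt A + pwt B := by
  unfold pwt
  refine le_trans (le_trans (Finset.card_le_card ?_) (Finset.card_union_le _ _)) le_rfl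
  intro i hi
  simp only [Finset.mem_filter, Finset.mem_union, Finset.mem_univ, true_and] at hi ⊢
  by_contra h
  push_neg at h
  obtain ⟨⟨h1, h2⟩, ⟨h3, h4⟩⟩ := h
  rcases hi with h | h
  · exact h (by simp [Prod.fst_add, h1, h3])
  · exact h (by simp [Prod.snd_add, h2, h4])

lemma pwt_sum_le {n : ℕ} (s : Finset ℕ) (C : ℕ → PauliVec n) :
    pwt (∑ j ∈ s, C j) ≤ ∑ j ∈ s, pwt (C j) := by
  classical
  induction s using Finset.induction with
  | empty => simp [pwt_zero]
  | @insert a s hj ih =>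
    rw [Finset.sum_insert hj, Finset.sum_insert hj]
    exact le_trans (pwt_add_le _ _) (by omega)

lemma redWt_le {n : ℕ} (S : AddSubgroup (PauliVec n)) (E : PauliVec n)
    {s : PauliVec n} (hs : s ∈ S) : redWt S E ≤ pwt (E + s) :=
  Nat.sInf_le ⟨s, hs, rfl⟩

/-- Local greedy decoders imply confinement: if an `(s₀, c)`-local greedy decoder exists
(for every error `E` of reduced weight `≤ s₀` there is a sequence of corrections, each of
weight `≤ c`, each strictly decreasing the syndrome weight, after which the reduced weight of
the residual error is `0`), then the code has `(s₀, 1/c)`-linear confinement: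
`c · wt(σ(E)) ≥ |E|_R` for every `E` with `|E|_R ≤ s₀`. -/
theorem greedy_decoder_implies_confinement
    {n r : ℕ} (S : AddSubgroup (PauliVec n))
    (σ : PauliVec n →+ (Fin r → ZMod 2))
    (hσS : ∀ s ∈ S, σ s = 0)
    (s₀ c : ℕ)
    (hdec : ∀ E : PauliVec n, redWt S E ≤ s₀ →
      ∃ (t : ℕ) (C : ℕ → PauliVec n),
        (∀ i, 1 ≤ i → i ≤ t → pwt (C i) ≤ c) ∧
        (∀ i, 1 ≤ i → i ≤ t →
          synWt (σ (E + ∑ j ∈ Finset.Icc 1 i, C j)) <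
            synWt (σ (E + ∑ j ∈ Finset.Icc 1 (i - 1), C j))) ∧
        redWt S (E + ∑ j ∈ Finset.Icc 1 t, C j) = 0) :
    ∀ E : PauliVec n, redWt S E ≤ s₀ → redWt S E ≤ c * synWt (σ E) := by
  intro E hE
  obtain ⟨t, C, hC, hdesc, hfin⟩ := hdec E hE
  -- t ≤ synWt (σ E)
  set f : ℕ → ℕ := fun i => synWt (σ (E + ∑ j ∈ Finset.Icc 1 i, C j)) with hf
  have hf0 : f 0 = synWt (σ E) := by
    simp [hf]
  have hstep : ∀ k ≤ t, f k + k ≤ f 0 := by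
    intro k hk
    induction k with
    | zero => simp
    | succ m ih =>
      have h1 := hdesc (m + 1) (by omega) hk
      have h2 := ih (by omega)
      simp only [Nat.add_sub_cancel] at h1
      have : f (m + 1) < f m := h1
      omega
  have ht : t ≤ synWt (σ E) := by
    have := hstep t le_rfl
    rw [hf0] at this
    omega
  -- redWt of residual is 0 gives a stabilizer s with E + ΣC + s = 0
  have hne : (0 : PauliVec n) ∈ S := S.zero_mem
  have hset : {w | ∃ s ∈ S, w = pwt (E + ∑ j ∈ Finset.Icc 1 t, C j + s)}.Nonempty :=
    ⟨_, 0, hne, rfl⟩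
  have h0 : 0 ∈ {w | ∃ s ∈ S, w = pwt (E + ∑ j ∈ Finset.Icc 1 t, C j + s)} := by
    have := (Nat.sInf_eq_zero).mp hfin
    rcases this with h | h
    · exact h
    · exact absurd (h ▸ hset) (by simp)
  obtain ⟨s, hsS, hs⟩ := h0
  have hzero : E + ∑ j ∈ Finset.Icc 1 t, C j + s = 0 := by
    have hs' := hs.symm
    unfold pwt at hs'
    rw [Finset.card_eq_zero, Finset.filter_eq_empty_iff] at hs'
    ext i
    · have := hs' (Finset.mem_univ i)
      push_neg at this
      simpa using this.1
    · have := hs' (Finset.mem_univ i)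
      push_neg at this
      simpa using this.2
  have hEs : E + s = -(∑ j ∈ Finset.Icc 1 t, C j) := by
    have : E + s + ∑ j ∈ Finset.Icc 1 t, C j = 0 := by
      rw [← hzero]; ring
    linear_combination this
  have key : redWt S E ≤ pwt (∑ j ∈ Finset.Icc 1 t, C j) := by
    have := redWt_le S E hsS
    rw [hEs, pwt_neg] at this
    exact this
  have hsum : pwt (∑ j ∈ Finset.Icc 1 t, C j) ≤ c * t := by
    refine le_trans (pwt_sum_le _ _) ?_
    calc ∑ j ∈ Finset.Icc 1 t, pwt (C j) ≤ ∑ j ∈ Finset.Icc 1 t, c := by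
          apply Finset.sum_le_sum
          intro j hj
          rw [Finset.mem_Icc] at hj
          exact hC j hj.1 hj.2
      _ = c * t := by
          rw [Finset.sum_const, Nat.card_Icc]
          simp [Nat.mul_comm]
  calc redWt S E ≤ c * t := le_trans key hsum
    _ ≤ c * synWt (σ E) := Nat.mul_le_mul_left c ht
end

section
/- (Row-parity lemma from the subsystem-distance proof.) In the merged-patch construction, for i ∈ [m_A] define the row set R_i := {VV(i,l) : l ∈ [m_B]} ∪ {ι_Ā(i)} ⊆ M. If 𝟙 ∈ ker H_B̄ (equivalently, every row of H_B̄ has even Hamming weight), then every vector v in the F₂-span of {rows of H_X^C} ∪ {S^X_{T,i} : i ∈ [m_A]} inside F₂^M satisfies |supp(v) ∩ R_i| ≡ 0 (mod 2) for every i ∈ [m_A]. -/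
/-- Membership in the row set `R_i = {VV(i,l) : l ∈ [m_B]} ∪ {ι_Ā(i)} ⊆ M`. -/
def inR {A : Type} [DecidableEq A] {mA mB rA' rB' : ℕ} (ιA : Fin mA → A) (i : Fin mA) :
    MQ A mA mB rA' rB' → Bool
  | Sum.inl a => decide (a = ιA i)
  | Sum.inr (Sum.inl (k, _)) => decide (k = i)
  | _ => false

/-- Row-parity lemma: if `𝟙 ∈ ker H_B̄`, then every vector in the `F₂`-span of the rows of
`H_X^C` together with the `S^X_{T,i}` has even support in each row set
`R_i = {VV(i,l)}_l ∪ {ι_Ā(i)}`. -/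
theorem merged_patch_row_parity
    {A : Type} [Fintype A] [DecidableEq A] {rXA rZA mA rA' mB rB' : ℕ}
    (HXA : Matrix (Fin rXA) A (ZMod 2)) (HZA : Matrix (Fin rZA) A (ZMod 2))
    (hOrthA : HXA * HZA.transpose = 0)
    (xA : A → ZMod 2) (hxA : HZA.mulVec xA = 0)
    (ιA : Fin mA → A) (hιinj : Function.Injective ιA)
    (hιrange : ∀ a, xA a ≠ 0 ↔ ∃ k, ιA k = a)
    (HAbar : Matrix (Fin rA') (Fin mA) (ZMod 2))
    (ρ : Fin rA' → Fin rZA) (hρinj : Function.Injective ρ)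
    (hρrange : ∀ j, (∃ a, xA a ≠ 0 ∧ HZA j a ≠ 0) ↔ ∃ i, ρ i = j)
    (hHAbar : ∀ i k, HAbar i k = HZA (ρ i) (ιA k))
    (HBbar : Matrix (Fin rB') (Fin mB) (ZMod 2))
    (hB1 : HBbar.mulVec (fun _ => 1) = 0)
    (ℓ : Fin mB) :
    ∀ v ∈ Submodule.span (ZMod 2)
        (((Set.range fun p : Fin mA × Fin rB' => sXC HAbar HBbar p.1 p.2) ∪
          (Set.range (SXT HAbar ιA ℓ))) : Set (MQ A mA mB rA' rB' → ZMod 2)),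
      ∀ i : Fin mA,
        Even ((Finset.univ.filter fun q => v q ≠ 0 ∧ inR ιA i q).card) := by
  intro v hv i
  set χ : MQ A mA mB rA' rB' → ZMod 2 := fun q => if inR ιA i q then 1 else 0 with hχ
  have hone : ∀ x : ZMod 2, x ≠ 0 → x = 1 := by decide
  have hsum : ∑ q, v q * χ q = 0 := by
    induction hv using Submodule.span_induction with
    | mem g hg =>
      rcases hg with ⟨⟨i', j⟩, rfl⟩ | ⟨i', rfl⟩
      · -- sXC generator
        have hB : ∑ l, HBbar j l = 0 := by
          have := congrFun hB1 j
          simpa [Matrix.mulVec, dotProduct] using this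
        by_cases h : i' = i
        · subst h
          simp [sXC, inR, χ, Fintype.sum_sum_type, Fintype.sum_prod_type,
            ite_mul, mul_ite, Finset.mul_sum, hB]
        · simp only [sXC, inR, χ, Fintype.sum_sum_type, Fintype.sum_prod_type,
            ite_mul, mul_ite]
          simp [h, hB]
      · -- SXT generator
        by_cases h : i' = i
        · subst h
          simp [SXT, eA, eVV, eT, inR, χ, Fintype.sum_sum_type, Fintype.sum_prod_type,
            add_mul, Finset.sum_add_distrib, ite_mul, mul_ite, Finset.sum_apply,
            Pi.smul_apply, smul_eq_mul, hιinj.eq_iff, Finset.filter_eq']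
          decide
        · simp [SXT, eA, eVV, eT, inR, χ, Fintype.sum_sum_type, Fintype.sum_prod_type,
            add_mul, Finset.sum_add_distrib, ite_mul, mul_ite, Finset.sum_apply,
            Pi.smul_apply, smul_eq_mul, hιinj.eq_iff, Ne.symm h, hιinj.ne h]
    | zero => simp
    | add x y hx hy hx' hy' => simp [add_mul, Finset.sum_add_distrib, hx', hy']
    | smul c x hx hx' => simp [mul_assoc, ← Finset.mul_sum, hx']
  have hcard : ((Finset.univ.filter fun q => v q ≠ 0 ∧ inR ιA i q).card : ZMod 2)
      = ∑ q, v q * χ q := by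
    rw [Finset.card_eq_sum_ones, Nat.cast_sum]
    rw [← Finset.sum_filter_of_ne (p := fun q => v q ≠ 0 ∧ (inR ιA i q : Prop))
      (s := Finset.univ) (f := fun q => v q * χ q)]
    · apply Finset.sum_congr rfl
      intro q hq
      simp only [Finset.mem_filter] at hq
      rw [hone _ hq.2.1, hχ]
      simp [hq.2.2]
    · intro q _ hq
      constructor
      · intro h0; apply hq; rw [h0, zero_mul]
      · by_contra h0
        apply hq
        simp [hχ, h0]
  rw [hsum] at hcard
  have : (2 : ℕ) ∣ (Finset.univ.filter fun q => v q ≠ 0 ∧ inR ιA i q).card := by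
    exact (ZMod.natCast_eq_zero_iff _ 2).mp hcard
  exact even_iff_two_dvd.mpr this
end

section
/- (Theorem, Z-part of the subsystem code distance.) In the merging subsystem code setting, every Z-type dressed logical operator — i.e., every v ∈ F₂^M with ⟨v, x⟩ = 0 for all x ∈ S_X and v ∉ 𝒢_Z — satisfies wt(v) ≥ min(d_A, d_B). -/
/-- The `X`-part `𝒢_X` of the gauge group of the merging subsystem code: the span of the rows
of `H_X^A`, the rows of `H_X^C`, and the `S^X_{T,i}`. -/
def GXgauge {A : Type} [Fintype A] [DecidableEq A] {rXA mA mB rA' rB' : ℕ}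
    (HXA : Matrix (Fin rXA) A (ZMod 2))
    (HAbar : Matrix (Fin rA') (Fin mA) (ZMod 2)) (HBbar : Matrix (Fin rB') (Fin mB) (ZMod 2))
    (ιA : Fin mA → A) (ℓ : Fin mB) :
    Submodule (ZMod 2) (MQ A mA mB rA' rB' → ZMod 2) :=
  Submodule.span (ZMod 2)
    ((Set.range fun i : Fin rXA => (onA (HXA i) : MQ A mA mB rA' rB' → ZMod 2)) ∪
      (Set.range fun p : Fin mA × Fin rB' => sXC HAbar HBbar p.1 p.2) ∪
      (Set.range (SXT HAbar ιA ℓ)))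

/-- The `Z`-part `𝒢_Z` of the gauge group of the merging subsystem code: the span of the rows
of `H_Z^A`, the rows of `H_Z^C`, the `z^A_i + e_{T(i)}`, the `s^Z_{i,ℓ} + e_{T(i)}`, and
`z̄_A`. -/
def GZgauge {A : Type} [Fintype A] [DecidableEq A] {rZA mA mB rA' rB' : ℕ}
    (HZA : Matrix (Fin rZA) A (ZMod 2))
    (HAbar : Matrix (Fin rA') (Fin mA) (ZMod 2)) (HBbar : Matrix (Fin rB') (Fin mB) (ZMod 2))
    (ρ : Fin rA' → Fin rZA) (ℓ : Fin mB) (zA0 : A → ZMod 2) :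
    Submodule (ZMod 2) (MQ A mA mB rA' rB' → ZMod 2) :=
  Submodule.span (ZMod 2)
    ((Set.range fun i : Fin rZA => (onA (HZA i) : MQ A mA mB rA' rB' → ZMod 2)) ∪
      (Set.range fun p : Fin rA' × Fin mB => sZC HAbar HBbar p.1 p.2) ∪
      (Set.range fun i : Fin rA' => onA (HZA (ρ i)) + eT i) ∪
      (Set.range fun i : Fin rA' => sZC HAbar HBbar i ℓ + eT i) ∪
      {onA zA0})

/-- The `X`-part of the stabilizer group of the merging subsystem code:
`S_X = {x ∈ 𝒢_X : ⟨x, z⟩ = 0 for all z ∈ 𝒢_Z}`. -/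
def SXstab {A : Type} [Fintype A] [DecidableEq A] {rXA rZA mA mB rA' rB' : ℕ}
    (HXA : Matrix (Fin rXA) A (ZMod 2)) (HZA : Matrix (Fin rZA) A (ZMod 2))
    (HAbar : Matrix (Fin rA') (Fin mA) (ZMod 2)) (HBbar : Matrix (Fin rB') (Fin mB) (ZMod 2))
    (ιA : Fin mA → A) (ρ : Fin rA' → Fin rZA) (ℓ : Fin mB) (zA0 : A → ZMod 2) :
    Set (MQ A mA mB rA' rB' → ZMod 2) :=
  {x | x ∈ GXgauge HXA HAbar HBbar ιA ℓ ∧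
    ∀ z ∈ GZgauge HZA HAbar HBbar ρ ℓ zA0, bform x z = 0}

/-- The `Z`-part of the stabilizer group of the merging subsystem code:
`S_Z = {z ∈ 𝒢_Z : ⟨z, x⟩ = 0 for all x ∈ 𝒢_X}`. -/
def SZstab {A : Type} [Fintype A] [DecidableEq A] {rXA rZA mA mB rA' rB' : ℕ}
    (HXA : Matrix (Fin rXA) A (ZMod 2)) (HZA : Matrix (Fin rZA) A (ZMod 2))
    (HAbar : Matrix (Fin rA') (Fin mA) (ZMod 2)) (HBbar : Matrix (Fin rB') (Fin mB) (ZMod 2))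
    (ιA : Fin mA → A) (ρ : Fin rA' → Fin rZA) (ℓ : Fin mB) (zA0 : A → ZMod 2) :
    Set (MQ A mA mB rA' rB' → ZMod 2) :=
  {z | z ∈ GZgauge HZA HAbar HBbar ρ ℓ zA0 ∧
    ∀ x ∈ GXgauge HXA HAbar HBbar ιA ℓ, bform z x = 0}

/-! Let `v` be orthogonal to `S_X` with `wt v < min d_A d_B`. The `X`-checks of `A` and of the
ancilla patch lie in `S_X`. Hence the `A`-part of `v` is a `Z`-type operator of `A` lighter than
`d_A`, so a product of `Z`-checks of `A`; and the ancilla parts `f` (on `VV`) and `g` (on `CC`)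
satisfy `f H_B̄ᵀ = H_Āᵀ g`. As `wt v < d_B ≤ m_B`, some column of `f` vanishes, and together with
`ker H_B̄ = {0, 𝟙}` and the surjectivity of `H_B̄` (dual to `ker H_B̄ᵀ = 0`) this gives
`f = H_Āᵀ c`, `g = c H_B̄ᵀ`: the ancilla part is a product of `Z`-checks of the ancilla patch.
The interface part is absorbed by the generators `z^A_i + e_{T(i)}`, so `v ∈ 𝒢_Z`. -/

open Matrix

theorem dotProduct_eq_zero_of_mem_span {R ι : Type*} [CommSemiring R] [Fintype ι]
    {x : ι → R} {S : Set (ι → R)} (h : ∀ z ∈ S, x ⬝ᵥ z = 0) {z : ι → R}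
    (hz : z ∈ Submodule.span R S) : x ⬝ᵥ z = 0 :=
  (Submodule.span_le (p := LinearMap.ker (dotProductBilin R R x))).mpr h hz

theorem dotProduct_eq_zero_of_mul_eq_zero {R ι : Type*} [NonUnitalNonAssocSemiring R]
    [Fintype ι] {x z : ι → R} (h : ∀ i, x i * z i = 0) : x ⬝ᵥ z = 0 :=
  Finset.sum_eq_zero fun i _ => h i

theorem Matrix.mulVec_surjective_of_injective_transpose {K : Type*} [Field K] {m n : Type*}
    [Fintype m] [Fintype n] (H : Matrix m n K) (h : Function.Injective Hᵀ.mulVec) :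
    Function.Surjective H.mulVec := by
  have hrank : H.rank = Fintype.card m := by
    rw [← rank_transpose, rank, LinearMap.finrank_range_of_inj h,
      Module.finrank_fintype_fun_eq_card]
  have htop : LinearMap.range H.mulVecLin = ⊤ :=
    Submodule.eq_top_of_finrank_eq (by rw [← rank, hrank, Module.finrank_fintype_fun_eq_card])
  exact LinearMap.range_eq_top.mp htop

theorem Matrix.exists_eq_transpose_mul_and_eq_mul_transpose {K : Type*} [CommRing K]
    {m n r s : Type*} [Fintype m] [Fintype n] [Fintype r] [Fintype s]
    (HA : Matrix r m K) (HB : Matrix s n K) (hsurj : Function.Surjective HB.mulVec)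
    (hone : HB *ᵥ 1 = 0) (hconst : ∀ v, HB *ᵥ v = 0 → ∀ l l', v l = v l')
    (f : Matrix m n K) (g : Matrix r s K) (hfg : f * HBᵀ = HAᵀ * g)
    (l₀ : n) (hf : ∀ k, f k l₀ = 0) :
    ∃ c : Matrix r n K, f = HAᵀ * c ∧ g = c * HBᵀ := by
  -- Lift `g` row by row to `c₀`; the rows of `f - HAᵀ c₀` then lie in `ker HB`, hence are
  -- constant, and the zero column `l₀` pins that constant down, so shifting `c₀` by its
  -- `l₀`-th column corrects `f` without changing `c₀ HBᵀ`.
  obtain ⟨c₀, hc₀⟩ : ∃ c₀ : Matrix r n K, ∀ i, HB *ᵥ c₀ i = g i :=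
    ⟨_, fun i => (hsurj (g i)).choose_spec⟩
  have hc₀g : c₀ * HBᵀ = g := by
    ext i j
    simp only [← hc₀ i, mul_apply, mulVec, dotProduct, transpose_apply, mul_comm]
  have hrow : ∀ k, HB *ᵥ (f - HAᵀ * c₀) k = 0 := by
    intro k
    have : (f - HAᵀ * c₀) * HBᵀ = 0 := by
      rw [Matrix.sub_mul, Matrix.mul_assoc, hc₀g, hfg, sub_self]
    ext j
    simpa [mul_apply, mulVec, dotProduct, mul_comm] using congrFun (congrFun this k) j
  refine ⟨c₀ - vecMulVec (fun i => c₀ i l₀) 1, ?_, ?_⟩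
  · ext k l
    have hkl := hconst _ (hrow k) l l₀
    have hcol : (HAᵀ * c₀) k l₀ = (HAᵀ *ᵥ fun i => c₀ i l₀) k := rfl
    simp only [sub_apply, hf k] at hkl
    rw [Matrix.mul_sub, mul_vecMulVec, sub_apply, vecMulVec_apply, Pi.one_apply, mul_one, ← hcol]
    linear_combination hkl
  · rw [Matrix.sub_mul, vecMulVec_mul, vecMul_transpose, hone, hc₀g]
    ext i j
    simp [vecMulVec_apply]

theorem wt_comp_le {ι κ : Type} [Fintype ι] [Fintype κ] (v : κ → ZMod 2) {e : ι → κ}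
    (he : Function.Injective e) : wt (v ∘ e) ≤ wt v :=
  Finset.card_le_card_of_injOn e (fun _ hi => by simpa using hi) he.injOn

theorem wt_eq_of_support_eq_range {ι : Type} [Fintype ι] {m : ℕ} (z : ι → ZMod 2)
    {e : Fin m → ι} (he : Function.Injective e) (hsupp : ∀ i, z i ≠ 0 ↔ ∃ k, e k = i) :
    wt z = m := by
  classical
  have : Finset.univ.filter (fun i => z i ≠ 0) = Finset.univ.image e := by
    ext i
    simp [hsupp i]
  rw [wt, this, Finset.card_image_of_injective _ he, Finset.card_univ, Fintype.card_fin]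

theorem exists_col_eq_zero_of_wt_lt {m n : Type} [Fintype m] [Fintype n]
    (f : Matrix m n (ZMod 2)) (h : wt (Function.uncurry f) < Fintype.card n) :
    ∃ l, ∀ k, f k l = 0 := by
  by_contra! hcols
  choose k hk using hcols
  refine h.not_ge (Finset.card_le_card_of_injOn (fun l => (k l, l)) (fun l _ => ?_) ?_)
  · exact Finset.mem_coe.mpr (Finset.mem_filter.mpr ⟨Finset.mem_univ _, hk l⟩)
  · exact fun l _ l' _ hll' => congrArg Prod.snd hll'

theorem mem_rowSpan_of_wt_lt_distance {ι : Type} [Fintype ι] {rX rZ : ℕ}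
    {HX : Matrix (Fin rX) ι (ZMod 2)} {HZ : Matrix (Fin rZ) ι (ZMod 2)} {d : ℕ}
    (hd : IsLeast {d : ℕ | ∃ v : ι → ZMod 2,
      ((HZ.mulVec v = 0 ∧ v ∉ rowSpan HX) ∨ (HX.mulVec v = 0 ∧ v ∉ rowSpan HZ)) ∧
      wt v = d} d)
    {v : ι → ZMod 2} (hv : HX *ᵥ v = 0) (hwt : wt v < d) : v ∈ rowSpan HZ :=
  by_contra fun hnot => hwt.not_ge (hd.2 ⟨v, .inr ⟨hv, hnot⟩, rfl⟩)

section MergedCode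

variable {A : Type} [Fintype A] {mA mB rA' rB' : ℕ}
  (HAbar : Matrix (Fin rA') (Fin mA) (ZMod 2)) (HBbar : Matrix (Fin rB') (Fin mB) (ZMod 2))

def vvPart (v : MQ A mA mB rA' rB' → ZMod 2) : Matrix (Fin mA) (Fin mB) (ZMod 2) :=
  Matrix.of fun k l => v (Sum.inr (Sum.inl (k, l)))

def ccPart (v : MQ A mA mB rA' rB' → ZMod 2) : Matrix (Fin rA') (Fin rB') (ZMod 2) :=
  Matrix.of fun k l => v (Sum.inr (Sum.inr (Sum.inl (k, l))))

theorem dotProduct_onA (v : MQ A mA mB rA' rB' → ZMod 2) (u : A → ZMod 2) :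
    v ⬝ᵥ onA u = (v ∘ Sum.inl) ⬝ᵥ u := by
  simp [dotProduct, Fintype.sum_sum_type, onA]

theorem onA_dotProduct_sZC (u : A → ZMod 2) (i : Fin rA') (j : Fin mB) :
    onA u ⬝ᵥ sZC HAbar HBbar i j = 0 :=
  dotProduct_eq_zero_of_mul_eq_zero <| by rintro (a | q) <;> simp [onA, sZC]

theorem onA_dotProduct_eT (u : A → ZMod 2) (i : Fin rA') :
    (onA u : MQ A mA mB rA' rB' → ZMod 2) ⬝ᵥ eT i = 0 :=
  dotProduct_eq_zero_of_mul_eq_zero <| by rintro (a | q | q | t) <;> simp [onA, eT]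

theorem sXC_dotProduct_onA (i : Fin mA) (j : Fin rB') (u : A → ZMod 2) :
    sXC HAbar HBbar i j ⬝ᵥ onA u = 0 :=
  dotProduct_eq_zero_of_mul_eq_zero <| by rintro (a | q) <;> simp [onA, sXC]

theorem sXC_dotProduct_eT (i : Fin mA) (j : Fin rB') (k : Fin rA') :
    (sXC HAbar HBbar i j : MQ A mA mB rA' rB' → ZMod 2) ⬝ᵥ eT k = 0 :=
  dotProduct_eq_zero_of_mul_eq_zero <| by rintro (a | q | q | t) <;> simp [sXC, eT]

theorem dotProduct_sXC (v : MQ A mA mB rA' rB' → ZMod 2) (i : Fin mA) (j : Fin rB') :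
    v ⬝ᵥ sXC HAbar HBbar i j = (vvPart v * HBbarᵀ) i j + (HAbarᵀ * ccPart v) i j := by
  simp [dotProduct, Fintype.sum_sum_type, Fintype.sum_prod_type, sXC, vvPart, ccPart, mul_apply,
    mul_comm]

theorem sXC_dotProduct_sZC (i : Fin mA) (j : Fin rB') (i' : Fin rA') (j' : Fin mB) :
    (sXC HAbar HBbar i j : MQ A mA mB rA' rB' → ZMod 2) ⬝ᵥ sZC HAbar HBbar i' j' = 0 := by
  simp [dotProduct, Fintype.sum_sum_type, Fintype.sum_prod_type, sXC, sZC, mul_comm,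
    CharTwo.add_self_eq_zero]

end MergedCode

section Gauge

variable {A : Type} [Fintype A] [DecidableEq A] {rXA rZA mA mB rA' rB' : ℕ}
  {HXA : Matrix (Fin rXA) A (ZMod 2)} {HZA : Matrix (Fin rZA) A (ZMod 2)}
  {HAbar : Matrix (Fin rA') (Fin mA) (ZMod 2)} {HBbar : Matrix (Fin rB') (Fin mB) (ZMod 2)}
  {ιA : Fin mA → A} {ρ : Fin rA' → Fin rZA} {ℓ : Fin mB} {zA0 : A → ZMod 2}

theorem bform_eq_zero_of_mem_GZgauge {x : MQ A mA mB rA' rB' → ZMod 2}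
    (hZA : ∀ i, x ⬝ᵥ onA (HZA i) = 0) (hZC : ∀ i j, x ⬝ᵥ sZC HAbar HBbar i j = 0)
    (hT : ∀ i, x ⬝ᵥ eT i = 0) (hzA0 : x ⬝ᵥ onA zA0 = 0) {z : MQ A mA mB rA' rB' → ZMod 2}
    (hz : z ∈ GZgauge HZA HAbar HBbar ρ ℓ zA0) : bform x z = 0 := by
  refine dotProduct_eq_zero_of_mem_span ?_ hz
  rintro _ ((((⟨i, rfl⟩ | ⟨⟨i, j⟩, rfl⟩) | ⟨i, rfl⟩) | ⟨i, rfl⟩) | rfl)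
  · exact hZA i
  · exact hZC i j
  · rw [dotProduct_add, hZA, hT, add_zero]
  · rw [dotProduct_add, hZC, hT, add_zero]
  · exact hzA0

theorem onA_mem_SXstab (hOrthA : HXA * HZAᵀ = 0) (hzA0 : HXA *ᵥ zA0 = 0) (j : Fin rXA) :
    onA (HXA j) ∈ SXstab HXA HZA HAbar HBbar ιA ρ ℓ zA0 :=
  ⟨Submodule.subset_span (.inl (.inl ⟨j, rfl⟩)), fun _ =>
    bform_eq_zero_of_mem_GZgauge
      (fun i => by rw [dotProduct_onA]; exact congrFun (congrFun hOrthA j) i)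
      (fun i j => onA_dotProduct_sZC HAbar HBbar _ i j) (onA_dotProduct_eT _)
      (by rw [dotProduct_onA]; exact congrFun hzA0 j)⟩

theorem sXC_mem_SXstab (i : Fin mA) (j : Fin rB') :
    sXC HAbar HBbar i j ∈ SXstab HXA HZA HAbar HBbar ιA ρ ℓ zA0 :=
  ⟨Submodule.subset_span (.inl (.inr ⟨(i, j), rfl⟩)), fun _ =>
    bform_eq_zero_of_mem_GZgauge
      (fun _ => sXC_dotProduct_onA HAbar HBbar i j _) (sXC_dotProduct_sZC HAbar HBbar i j)
      (sXC_dotProduct_eT HAbar HBbar i j) (sXC_dotProduct_onA HAbar HBbar i j _)⟩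

theorem mulVec_comp_inl_eq_zero_of_orthogonal (hOrthA : HXA * HZAᵀ = 0)
    (hzA0 : HXA *ᵥ zA0 = 0) {v : MQ A mA mB rA' rB' → ZMod 2}
    (hv : ∀ x ∈ SXstab HXA HZA HAbar HBbar ιA ρ ℓ zA0, bform v x = 0) :
    HXA *ᵥ (v ∘ Sum.inl) = 0 := by
  ext j
  have h : v ⬝ᵥ onA (HXA j) = 0 := hv _ (onA_mem_SXstab hOrthA hzA0 j)
  rwa [dotProduct_onA, dotProduct_comm] at h

theorem vvPart_mul_transpose_eq_of_orthogonal {v : MQ A mA mB rA' rB' → ZMod 2}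
    (hv : ∀ x ∈ SXstab HXA HZA HAbar HBbar ιA ρ ℓ zA0, bform v x = 0) :
    vvPart v * HBbarᵀ = HAbarᵀ * ccPart v := by
  ext i j
  have h : v ⬝ᵥ sXC HAbar HBbar i j = 0 := hv _ (sXC_mem_SXstab i j)
  rwa [dotProduct_sXC, CharTwo.add_eq_zero] at h

theorem mem_GZgauge_of_factorization {v : MQ A mA mB rA' rB' → ZMod 2}
    (hA : v ∘ Sum.inl ∈ rowSpan HZA) (c : Matrix (Fin rA') (Fin mB) (ZMod 2))
    (hf : vvPart v = HAbarᵀ * c) (hg : ccPart v = c * HBbarᵀ) :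
    v ∈ GZgauge HZA HAbar HBbar ρ ℓ zA0 := by
  obtain ⟨b, hb⟩ := (Submodule.mem_span_range_iff_exists_fun _).mp hA
  set t : Fin rA' → ZMod 2 := fun i => v (Sum.inr (Sum.inr (Sum.inr i)))
  have hdecomp : v = ∑ j, b j • onA (HZA j) + ∑ i, t i • onA (HZA (ρ i)) +
      ∑ p : Fin rA' × Fin mB, c p.1 p.2 • sZC HAbar HBbar p.1 p.2 +
      ∑ i, t i • (onA (HZA (ρ i)) + eT i) := by
    ext (a | ⟨k, l⟩ | ⟨k, l⟩ | i)
    · have ha := congrFun hb a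
      simpa [Finset.sum_apply, onA, sZC, eT, add_assoc, CharTwo.add_self_eq_zero]
        using ha.symm
    · simpa [Finset.sum_apply, onA, sZC, eT, Fintype.sum_prod_type, vvPart, mul_apply, mul_comm]
        using congrFun (congrFun hf k) l
    · simpa [Finset.sum_apply, onA, sZC, eT, Fintype.sum_prod_type, ccPart, mul_apply, mul_comm]
        using congrFun (congrFun hg k) l
    · simp [Finset.sum_apply, onA, sZC, eT, t]
  rw [hdecomp]
  refine add_mem (add_mem (add_mem ?_ ?_) ?_) ?_ <;>
    refine Submodule.sum_mem _ fun p _ => Submodule.smul_mem _ _ (Submodule.subset_span ?_)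
  · exact .inl (.inl (.inl (.inl ⟨p, rfl⟩)))
  · exact .inl (.inl (.inl (.inl ⟨ρ p, rfl⟩)))
  · exact .inl (.inl (.inl (.inr ⟨p, rfl⟩)))
  · exact .inl (.inl (.inr ⟨p, rfl⟩))

end Gauge

theorem merged_subsystem_distance_Z_general
    {A : Type} [Fintype A] [DecidableEq A] {rXA rZA mA rA' : ℕ}
    (HXA : Matrix (Fin rXA) A (ZMod 2)) (HZA : Matrix (Fin rZA) A (ZMod 2))
    (hOrthA : HXA * HZA.transpose = 0)
    {B : Type} [Fintype B] {rXB rZB mB rB' : ℕ}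
    (HXB : Matrix (Fin rXB) B (ZMod 2)) (HZB : Matrix (Fin rZB) B (ZMod 2))
    (dA dB : ℕ)
    (hdA : IsLeast {d : ℕ | ∃ v : A → ZMod 2,
      ((HZA.mulVec v = 0 ∧ v ∉ rowSpan HXA) ∨ (HXA.mulVec v = 0 ∧ v ∉ rowSpan HZA)) ∧
      wt v = d} dA)
    (hdB : IsLeast {d : ℕ | ∃ v : B → ZMod 2,
      ((HZB.mulVec v = 0 ∧ v ∉ rowSpan HXB) ∨ (HXB.mulVec v = 0 ∧ v ∉ rowSpan HZB)) ∧
      wt v = d} dB)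
    (ιA : Fin mA → A)
    (HAbar : Matrix (Fin rA') (Fin mA) (ZMod 2))
    (ρ : Fin rA' → Fin rZA)
    (zB : B → ZMod 2) (hzBker : HXB.mulVec zB = 0) (hzBnl : zB ∉ rowSpan HZB)
    (ιB : Fin mB → B) (hιBinj : Function.Injective ιB)
    (hιBrange : ∀ b, zB b ≠ 0 ↔ ∃ k, ιB k = b)
    (HBbar : Matrix (Fin rB') (Fin mB) (ZMod 2))
    (hkerB : {v : Fin mB → ZMod 2 | HBbar.mulVec v = 0} = {0, fun _ => 1})
    (hkerBT : {v : Fin rB' → ZMod 2 | HBbar.transpose.mulVec v = 0} = {0})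
    (ℓ : Fin mB)
    (zA0 : A → ZMod 2) (hzA0ker : HXA.mulVec zA0 = 0)
    : ∀ v : MQ A mA mB rA' rB' → ZMod 2,
      (∀ x ∈ SXstab HXA HZA HAbar HBbar ιA ρ ℓ zA0, bform v x = 0) →
      v ∉ GZgauge HZA HAbar HBbar ρ ℓ zA0 →
      min dA dB ≤ wt v := by
  intro v hv hvG
  by_contra! hlt
  apply hvG
  have hA : v ∘ Sum.inl ∈ rowSpan HZA :=
    mem_rowSpan_of_wt_lt_distance hdA (mulVec_comp_inl_eq_zero_of_orthogonal hOrthA hzA0ker hv)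
      ((wt_comp_le v Sum.inl_injective).trans_lt (by omega))
  have hdB_le : dB ≤ mB :=
    wt_eq_of_support_eq_range zB hιBinj hιBrange ▸ hdB.2 ⟨zB, .inr ⟨hzBker, hzBnl⟩, rfl⟩
  obtain ⟨l₀, hl₀⟩ := exists_col_eq_zero_of_wt_lt (vvPart v) <| by
    have := wt_comp_le v (e := fun p : Fin mA × Fin mB => Sum.inr (Sum.inl p))
      (Sum.inr_injective.comp Sum.inl_injective)
    rw [Fintype.card_fin]
    exact this.trans_lt (by omega)
  have hone : HBbar *ᵥ 1 = 0 := (hkerB ▸ Set.mem_insert_of_mem _ rfl :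
    (1 : Fin mB → ZMod 2) ∈ {v : Fin mB → ZMod 2 | HBbar *ᵥ v = 0})
  have hconst : ∀ u, HBbar *ᵥ u = 0 → ∀ l l', u l = u l' := by
    intro u hu l l'
    rcases (hkerB ▸ hu : u ∈ ({0, fun _ => 1} : Set (Fin mB → ZMod 2))) with rfl | rfl <;> rfl
  have hinj : Function.Injective HBbarᵀ.mulVec :=
    (injective_iff_map_eq_zero HBbarᵀ.mulVecLin).mpr fun u hu =>
      (hkerBT ▸ hu : u ∈ ({0} : Set _))
  obtain ⟨c, hf, hg⟩ := exists_eq_transpose_mul_and_eq_mul_transpose HAbar HBbar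
    (mulVec_surjective_of_injective_transpose HBbar hinj) hone hconst _ _
    (vvPart_mul_transpose_eq_of_orthogonal hv) l₀ hl₀
  exact mem_GZgauge_of_factorization hA c hf hg

/-- `Z`-part of the subsystem code distance for lattice-surgery merging: every `Z`-type
dressed logical operator (a vector orthogonal to all of `S_X` but not in `𝒢_Z`) has weight
at least `min d_A d_B`. -/
theorem merged_subsystem_distance_Z
    {A : Type} [Fintype A] [DecidableEq A] {rXA rZA mA rA' : ℕ}
    (HXA : Matrix (Fin rXA) A (ZMod 2)) (HZA : Matrix (Fin rZA) A (ZMod 2))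
    (hOrthA : HXA * HZA.transpose = 0)
    {B : Type} [Fintype B] [DecidableEq B] {rXB rZB mB rB' : ℕ}
    (HXB : Matrix (Fin rXB) B (ZMod 2)) (HZB : Matrix (Fin rZB) B (ZMod 2))
    (hOrthB : HXB * HZB.transpose = 0)
    (dA dB : ℕ)
    (hdA : IsLeast {d : ℕ | ∃ v : A → ZMod 2,
      ((HZA.mulVec v = 0 ∧ v ∉ rowSpan HXA) ∨ (HXA.mulVec v = 0 ∧ v ∉ rowSpan HZA)) ∧
      wt v = d} dA)
    (hdB : IsLeast {d : ℕ | ∃ v : B → ZMod 2,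
      ((HZB.mulVec v = 0 ∧ v ∉ rowSpan HXB) ∨ (HXB.mulVec v = 0 ∧ v ∉ rowSpan HZB)) ∧
      wt v = d} dB)
    (xA : A → ZMod 2) (hxAker : HZA.mulVec xA = 0) (hxAnl : xA ∉ rowSpan HXA)
    (hxAmin : ∀ v : A → ZMod 2, HZA.mulVec v = 0 → v ∉ rowSpan HXA → wt xA ≤ wt v)
    (ιA : Fin mA → A) (hιinj : Function.Injective ιA)
    (hιrange : ∀ a, xA a ≠ 0 ↔ ∃ k, ιA k = a)
    (HAbar : Matrix (Fin rA') (Fin mA) (ZMod 2))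
    (ρ : Fin rA' → Fin rZA) (hρinj : Function.Injective ρ)
    (hρrange : ∀ j, (∃ a, xA a ≠ 0 ∧ HZA j a ≠ 0) ↔ ∃ i, ρ i = j)
    (hHAbar : ∀ i k, HAbar i k = HZA (ρ i) (ιA k))
    (zB : B → ZMod 2) (hzBker : HXB.mulVec zB = 0) (hzBnl : zB ∉ rowSpan HZB)
    (hzBmin : ∀ v : B → ZMod 2, HXB.mulVec v = 0 → v ∉ rowSpan HZB → wt zB ≤ wt v)
    (ιB : Fin mB → B) (hιBinj : Function.Injective ιB)
    (hιBrange : ∀ b, zB b ≠ 0 ↔ ∃ k, ιB k = b)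
    (HBbar : Matrix (Fin rB') (Fin mB) (ZMod 2))
    (ρB : Fin rB' → Fin rXB) (hρBinj : Function.Injective ρB)
    (hρBrange : ∀ j, (∃ b, zB b ≠ 0 ∧ HXB j b ≠ 0) ↔ ∃ i, ρB i = j)
    (hHBbar : ∀ i k, HBbar i k = HXB (ρB i) (ιB k))
    (hkerA : {v : Fin mA → ZMod 2 | HAbar.mulVec v = 0} = {0, fun _ => 1})
    (hkerB : {v : Fin mB → ZMod 2 | HBbar.mulVec v = 0} = {0, fun _ => 1})
    (hkerBT : {v : Fin rB' → ZMod 2 | HBbar.transpose.mulVec v = 0} = {0})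
    (ℓ : Fin mB)
    (zA0 : A → ZMod 2) (hzA0ker : HXA.mulVec zA0 = 0) (hzA0nl : zA0 ∉ rowSpan HZA)
    (hzA0pair : bform zA0 xA = 1)
    : ∀ v : MQ A mA mB rA' rB' → ZMod 2,
      (∀ x ∈ SXstab HXA HZA HAbar HBbar ιA ρ ℓ zA0, bform v x = 0) →
      v ∉ GZgauge HZA HAbar HBbar ρ ℓ zA0 →
      min dA dB ≤ wt v :=
  merged_subsystem_distance_Z_general HXA HZA hOrthA HXB HZB dA dB hdA hdB ιA HAbar ρ zB hzBker
    hzBnl ιB hιBinj hιBrange HBbar hkerB hkerBT ℓ zA0 hzA0ker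
end

section
/- (Rate formula for hypergraph product codes, used in the paper's Proposition on the ancilla patch.) For any check matrices H_A ∈ F₂^{r_A × n_A} and H_B ∈ F₂^{r_B × n_B}, the hypergraph product code of (H_A, H_B), with check matrices H_X and H_Z, satisfies (n_A·n_B + r_A·r_B) − rank(H_X) − rank(H_Z) = (n_A − rank H_A)(n_B − rank H_B) + (r_A − rank H_A)(r_B − rank H_B), where all ranks are over F₂. Equivalently, the number of logical qubits is k = k_A k_B + k_Aᵀ k_Bᵀ, where k_A = dim ker H_A, k_Aᵀ = dim ker H_Aᵀ, and similarly for B. -/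
open Matrix Module LinearMap

namespace HGPAux

variable {F : Type*} [Field F]

/-- `X ↦ (A * X, X * B)` as a linear map. -/
noncomputable def mulPair {m n p q : ℕ} (A : Matrix (Fin m) (Fin n) F)
    (B : Matrix (Fin p) (Fin q) F) :
    Matrix (Fin n) (Fin p) F →ₗ[F] Matrix (Fin m) (Fin p) F × Matrix (Fin n) (Fin q) F where
  toFun X := (A * X, X * B)
  map_add' X Y := by simp [Matrix.mul_add, Matrix.add_mul]
  map_smul' c X := by simp [Matrix.mul_smul, Matrix.smul_mul]

/-- `Y ↦ Y * B` as a linear map. -/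
noncomputable def mulRight {s p q : ℕ} (B : Matrix (Fin p) (Fin q) F) :
    Matrix (Fin s) (Fin p) F →ₗ[F] Matrix (Fin s) (Fin q) F where
  toFun Y := Y * B
  map_add' X Y := by simp [Matrix.add_mul]
  map_smul' c X := by simp [Matrix.smul_mul]

lemma mulRight_eq_zero_iff {s p q : ℕ} (B : Matrix (Fin p) (Fin q) F)
    (Y : Matrix (Fin s) (Fin p) F) :
    Y * B = 0 ↔ ∀ i, Bᵀ.mulVecLin (Y i) = 0 := by
  have key : ∀ (Y : Matrix (Fin s) (Fin p) F) i j,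
      Bᵀ.mulVecLin (Y i) j = (Y * B) i j := by
    intro Y i j
    show ∑ k, Bᵀ j k * Y i k = _
    simp [Matrix.mul_apply, Matrix.transpose_apply, mul_comm]
  constructor
  · intro h i
    funext j
    rw [key, h]
    rfl
  · intro h
    ext i j
    rw [← key, h i]
    rfl

noncomputable def rowsEquiv {s p q : ℕ} (B : Matrix (Fin p) (Fin q) F) :
    (LinearMap.ker (mulRight (s := s) B)) ≃ₗ[F] (Fin s → LinearMap.ker Bᵀ.mulVecLin) where
  toFun Y i := ⟨Y.1 i, by
    have h2 := Y.2
    rw [LinearMap.mem_ker] at h2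
    exact LinearMap.mem_ker.2 ((mulRight_eq_zero_iff B Y.1).1 h2 i)⟩
  invFun f := ⟨Matrix.of fun i => (f i).1, by
    rw [LinearMap.mem_ker]
    show (Matrix.of fun i => (f i).1) * B = 0
    exact (mulRight_eq_zero_iff B _).2 fun i => LinearMap.mem_ker.1 (f i).2⟩
  left_inv Y := rfl
  right_inv f := rfl
  map_add' X Y := rfl
  map_smul' c X := rfl

lemma finrank_ker_mulRight {s p q : ℕ} (B : Matrix (Fin p) (Fin q) F) :
    finrank F (LinearMap.ker (mulRight (s := s) B)) =
      s * finrank F (LinearMap.ker Bᵀ.mulVecLin) := by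
  rw [(rowsEquiv (s := s) B).finrank_eq, Module.finrank_pi_fintype,
    Finset.sum_const, Finset.card_univ, Fintype.card_fin, smul_eq_mul]

lemma finrank_ker_mulPair {m n p q : ℕ} (A : Matrix (Fin m) (Fin n) F)
    (B : Matrix (Fin p) (Fin q) F) :
    finrank F (LinearMap.ker (mulPair A B)) =
      finrank F (LinearMap.ker A.mulVecLin) * finrank F (LinearMap.ker Bᵀ.mulVecLin) := by
  set s := finrank F (LinearMap.ker A.mulVecLin) with hs
  let b : Basis (Fin s) F (LinearMap.ker A.mulVecLin) := Module.finBasis F _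
  set C : Matrix (Fin n) (Fin s) F := Matrix.of fun i j => (b j : Fin n → F) i with hC
  have hbk : ∀ j, A.mulVec ((b j : Fin n → F)) = 0 := fun j => LinearMap.mem_ker.1 (b j).2
  have hAC : A * C = 0 := by
    ext i j
    have := congrFun (hbk j) i
    simpa [hC, Matrix.mul_apply, Matrix.mulVec, dotProduct] using this
  -- C * Y as combination of basis vectors
  have hCmul : ∀ (y : Fin s → F) (i : Fin n),
      C.mulVec y i = ((∑ j, y j • b j : LinearMap.ker A.mulVecLin) : Fin n → F) i := by
    intro y i
    simp [hC, Matrix.mulVec, dotProduct, Submodule.coe_sum, Finset.sum_apply, mul_comm]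
  have hinj : ∀ {p' : ℕ} (Y : Matrix (Fin s) (Fin p') F), C * Y = 0 → Y = 0 := by
    intro p' Y hY
    ext j k
    have hsum : (∑ j, Y j k • b j : LinearMap.ker A.mulVecLin) = 0 := by
      apply Subtype.ext
      funext i
      have h0 : ((0 : LinearMap.ker A.mulVecLin) : Fin n → F) i = 0 := rfl
      rw [h0, ← hCmul (fun j => Y j k) i]
      have := congrFun (congrFun hY i) k
      simpa [Matrix.mul_apply, Matrix.mulVec, dotProduct] using this
    have := Fintype.linearIndependent_iff.1 b.linearIndependent (fun j => Y j k) hsum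
    simpa using this j
  have φmem : ∀ Y : LinearMap.ker (mulRight (s := s) (p := p) (q := q) B),
      (mulPair A B) (C * Y.1) = 0 := by
    intro Y
    have hYB : Y.1 * B = 0 := LinearMap.mem_ker.1 Y.2
    show (A * (C * Y.1), (C * Y.1) * B) = 0
    rw [← Matrix.mul_assoc, hAC, Matrix.mul_assoc, hYB]
    simp [Prod.ext_iff]
  let φ : (LinearMap.ker (mulRight (s := s) (p := p) (q := q) B)) →ₗ[F]
      (LinearMap.ker (mulPair A B)) :=
    { toFun := fun Y => ⟨C * Y.1, LinearMap.mem_ker.2 (φmem Y)⟩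
      map_add' := fun X Y => by
        apply Subtype.ext
        simp [Matrix.mul_add]
      map_smul' := fun c X => by
        apply Subtype.ext
        simp [Matrix.mul_smul] }
  have hφinj : Function.Injective φ := by
    intro X Y h
    apply Subtype.ext
    have h' : C * X.1 = C * Y.1 := congrArg Subtype.val h
    have : C * (X.1 - Y.1) = 0 := by
      rw [Matrix.mul_sub, h', sub_self]
    exact sub_eq_zero.1 (hinj _ this)
  have hφsurj : Function.Surjective φ := by
    rintro ⟨Z, hZ⟩
    rw [LinearMap.mem_ker] at hZ
    have hZ1 : A * Z = 0 := congrArg Prod.fst hZ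
    have hZ2 : Z * B = 0 := congrArg Prod.snd hZ
    have hcolmem : ∀ k, (fun i => Z i k) ∈ LinearMap.ker A.mulVecLin := by
      intro k
      rw [LinearMap.mem_ker]
      funext i
      have := congrFun (congrFun hZ1 i) k
      simpa [Matrix.mul_apply, Matrix.mulVec, dotProduct] using this
    set Y : Matrix (Fin s) (Fin p) F :=
      Matrix.of fun j k => b.repr ⟨fun i => Z i k, hcolmem k⟩ j with hY
    have hCY : C * Y = Z := by
      ext i k
      have h1 : (C * Y) i k = C.mulVec (fun j => Y j k) i := by
        simp [Matrix.mul_apply, Matrix.mulVec, dotProduct]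
      rw [h1, hCmul]
      simp only [hY, Matrix.of_apply]
      rw [b.sum_repr ⟨fun i => Z i k, hcolmem k⟩]
    have hYB : Y * B = 0 := by
      apply hinj
      rw [← Matrix.mul_assoc, hCY, hZ2]
    exact ⟨⟨Y, LinearMap.mem_ker.2 hYB⟩, Subtype.ext hCY⟩
  have := LinearEquiv.finrank_eq (LinearEquiv.ofBijective φ ⟨hφinj, hφsurj⟩)
  rw [← this, finrank_ker_mulRight]


section HGP

variable {rA nA rB nB : ℕ} (HA : Matrix (Fin rA) (Fin nA) (ZMod 2))
    (HB : Matrix (Fin rB) (Fin nB) (ZMod 2))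

lemma hgpZ_ker_iff (x : Fin rA × Fin nB → ZMod 2) :
    (hgpZ HA HB)ᵀ.mulVecLin x = 0 ↔
      HAᵀ * (Matrix.of fun i j => x (i, j)) = 0 ∧
        (Matrix.of fun i j => x (i, j)) * HBᵀ = 0 := by
  have hl : ∀ (k : Fin nA) (l : Fin nB), ((hgpZ HA HB)ᵀ.mulVecLin x) (Sum.inl (k, l)) =
      (HAᵀ * Matrix.of fun i j => x (i, j)) k l := by
    intro k l
    show ∑ p : Fin rA × Fin nB, hgpZ HA HB p (Sum.inl (k, l)) * x p = _
    rw [Fintype.sum_prod_type]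
    simp [hgpZ, Matrix.mul_apply, ite_mul, zero_mul, mul_comm]
  have hr : ∀ (k : Fin rA) (l : Fin rB), ((hgpZ HA HB)ᵀ.mulVecLin x) (Sum.inr (k, l)) =
      ((Matrix.of fun i j => x (i, j)) * HBᵀ) k l := by
    intro k l
    show ∑ p : Fin rA × Fin nB, hgpZ HA HB p (Sum.inr (k, l)) * x p = _
    rw [Fintype.sum_prod_type]
    simp [hgpZ, Matrix.mul_apply, ite_mul, zero_mul, mul_comm]
  constructor
  · intro h
    constructor
    · ext k l
      rw [← hl k l, h]
      rfl
    · ext k l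
      rw [← hr k l, h]
      rfl
  · rintro ⟨h1, h2⟩
    funext q
    rcases q with ⟨k, l⟩ | ⟨k, l⟩
    · rw [hl k l]
      simpa using congrFun (congrFun h1 k) l
    · rw [hr k l]
      simpa using congrFun (congrFun h2 k) l

lemma hgpX_ker_iff (x : Fin nA × Fin rB → ZMod 2) :
    (hgpX HA HB)ᵀ.mulVecLin x = 0 ↔
      HA * (Matrix.of fun i j => x (i, j)) = 0 ∧
        (Matrix.of fun i j => x (i, j)) * HB = 0 := by
  have hl : ∀ (k : Fin nA) (l : Fin nB), ((hgpX HA HB)ᵀ.mulVecLin x) (Sum.inl (k, l)) =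
      ((Matrix.of fun i j => x (i, j)) * HB) k l := by
    intro k l
    show ∑ p : Fin nA × Fin rB, hgpX HA HB p (Sum.inl (k, l)) * x p = _
    rw [Fintype.sum_prod_type]
    simp [hgpX, Matrix.mul_apply, ite_mul, zero_mul, mul_comm]
  have hr : ∀ (k : Fin rA) (l : Fin rB), ((hgpX HA HB)ᵀ.mulVecLin x) (Sum.inr (k, l)) =
      (HA * Matrix.of fun i j => x (i, j)) k l := by
    intro k l
    show ∑ p : Fin nA × Fin rB, hgpX HA HB p (Sum.inr (k, l)) * x p = _
    rw [Fintype.sum_prod_type]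
    simp [hgpX, Matrix.mul_apply, ite_mul, zero_mul, mul_comm]
  constructor
  · intro h
    constructor
    · ext k l
      rw [← hr k l, h]
      rfl
    · ext k l
      rw [← hl k l, h]
      rfl
  · rintro ⟨h1, h2⟩
    funext q
    rcases q with ⟨k, l⟩ | ⟨k, l⟩
    · rw [hl k l]
      simpa using congrFun (congrFun h2 k) l
    · rw [hr k l]
      simpa using congrFun (congrFun h1 k) l

noncomputable def zKerEquiv :
    (LinearMap.ker ((hgpZ HA HB)ᵀ.mulVecLin)) ≃ₗ[ZMod 2]
      (LinearMap.ker (mulPair HAᵀ HBᵀ)) where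
  toFun x := ⟨Matrix.of fun i j => x.1 (i, j), by
    rw [LinearMap.mem_ker]
    have h := (hgpZ_ker_iff HA HB x.1).1 (LinearMap.mem_ker.1 x.2)
    show (_, _) = 0
    rw [h.1, h.2]
    rfl⟩
  invFun X := ⟨fun p => X.1 p.1 p.2, by
    rw [LinearMap.mem_ker]
    apply (hgpZ_ker_iff HA HB _).2
    have h := LinearMap.mem_ker.1 X.2
    exact ⟨congrArg Prod.fst h, congrArg Prod.snd h⟩⟩
  left_inv x := rfl
  right_inv X := rfl
  map_add' x y := rfl
  map_smul' c x := rfl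

noncomputable def xKerEquiv :
    (LinearMap.ker ((hgpX HA HB)ᵀ.mulVecLin)) ≃ₗ[ZMod 2]
      (LinearMap.ker (mulPair HA HB)) where
  toFun x := ⟨Matrix.of fun i j => x.1 (i, j), by
    rw [LinearMap.mem_ker]
    have h := (hgpX_ker_iff HA HB x.1).1 (LinearMap.mem_ker.1 x.2)
    show (_, _) = 0
    rw [h.1, h.2]
    rfl⟩
  invFun X := ⟨fun p => X.1 p.1 p.2, by
    rw [LinearMap.mem_ker]
    apply (hgpX_ker_iff HA HB _).2
    have h := LinearMap.mem_ker.1 X.2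
    exact ⟨congrArg Prod.fst h, congrArg Prod.snd h⟩⟩
  left_inv x := rfl
  right_inv X := rfl
  map_add' x y := rfl
  map_smul' c x := rfl

lemma rank_hgpZ :
    (hgpZ HA HB).rank + finrank (ZMod 2) (LinearMap.ker HAᵀ.mulVecLin) *
      finrank (ZMod 2) (LinearMap.ker HB.mulVecLin) = rA * nB := by
  have h := LinearMap.finrank_range_add_finrank_ker ((hgpZ HA HB)ᵀ.mulVecLin)
  rw [Module.finrank_fintype_fun_eq_card, Fintype.card_prod, Fintype.card_fin,
    Fintype.card_fin] at h
  have hker : finrank (ZMod 2) (LinearMap.ker ((hgpZ HA HB)ᵀ.mulVecLin)) =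
      finrank (ZMod 2) (LinearMap.ker HAᵀ.mulVecLin) *
        finrank (ZMod 2) (LinearMap.ker HB.mulVecLin) := by
    rw [(zKerEquiv HA HB).finrank_eq, finrank_ker_mulPair, Matrix.transpose_transpose]
  have hr : (hgpZ HA HB).rank =
      finrank (ZMod 2) (LinearMap.range ((hgpZ HA HB)ᵀ.mulVecLin)) :=
    (Matrix.rank_transpose (hgpZ HA HB)).symm
  rw [hr, ← hker]
  exact h

lemma rank_hgpX :
    (hgpX HA HB).rank + finrank (ZMod 2) (LinearMap.ker HA.mulVecLin) *
      finrank (ZMod 2) (LinearMap.ker HBᵀ.mulVecLin) = nA * rB := by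
  have h := LinearMap.finrank_range_add_finrank_ker ((hgpX HA HB)ᵀ.mulVecLin)
  rw [Module.finrank_fintype_fun_eq_card, Fintype.card_prod, Fintype.card_fin,
    Fintype.card_fin] at h
  have hker : finrank (ZMod 2) (LinearMap.ker ((hgpX HA HB)ᵀ.mulVecLin)) =
      finrank (ZMod 2) (LinearMap.ker HA.mulVecLin) *
        finrank (ZMod 2) (LinearMap.ker HBᵀ.mulVecLin) := by
    rw [(xKerEquiv HA HB).finrank_eq, finrank_ker_mulPair]
  have hr : (hgpX HA HB).rank =
      finrank (ZMod 2) (LinearMap.range ((hgpX HA HB)ᵀ.mulVecLin)) :=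
    (Matrix.rank_transpose (hgpX HA HB)).symm
  rw [hr, ← hker]
  exact h

end HGP

end HGPAux

open HGPAux Module in
/-- Rate formula for hypergraph product codes: the number of logical qubits is
`(n_A n_B + r_A r_B) − rank H_X − rank H_Z
  = (n_A − rank H_A)(n_B − rank H_B) + (r_A − rank H_A)(r_B − rank H_B)`,
equivalently `k = k_A k_B + k_Aᵀ k_Bᵀ` with `k_A = dim ker H_A`, `k_Aᵀ = dim ker H_Aᵀ`, etc. -/
theorem hgp_rate_formula
    {rA nA rB nB : ℕ}
    (HA : Matrix (Fin rA) (Fin nA) (ZMod 2))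
    (HB : Matrix (Fin rB) (Fin nB) (ZMod 2)) :
    (nA * nB + rA * rB) - (hgpX HA HB).rank - (hgpZ HA HB).rank =
      (nA - HA.rank) * (nB - HB.rank) + (rA - HA.rank) * (rB - HB.rank) ∧
    (nA * nB + rA * rB) - (hgpX HA HB).rank - (hgpZ HA HB).rank =
      Module.finrank (ZMod 2) (LinearMap.ker HA.mulVecLin) *
        Module.finrank (ZMod 2) (LinearMap.ker HB.mulVecLin) +
      Module.finrank (ZMod 2) (LinearMap.ker HA.transpose.mulVecLin) *
        Module.finrank (ZMod 2) (LinearMap.ker HB.transpose.mulVecLin) := by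
  set ka := finrank (ZMod 2) (LinearMap.ker HA.mulVecLin) with hka
  set kaT := finrank (ZMod 2) (LinearMap.ker HAᵀ.mulVecLin) with hkaT
  set kb := finrank (ZMod 2) (LinearMap.ker HB.mulVecLin) with hkb
  set kbT := finrank (ZMod 2) (LinearMap.ker HBᵀ.mulVecLin) with hkbT
  have hA1 : HA.rank + ka = nA := by
    have h := LinearMap.finrank_range_add_finrank_ker HA.mulVecLin
    rw [Module.finrank_fintype_fun_eq_card, Fintype.card_fin] at h
    exact h
  have hA2 : HA.rank + kaT = rA := by
    have h := LinearMap.finrank_range_add_finrank_ker HAᵀ.mulVecLin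
    rw [Module.finrank_fintype_fun_eq_card, Fintype.card_fin] at h
    rw [← Matrix.rank_transpose HA]
    exact h
  have hB1 : HB.rank + kb = nB := by
    have h := LinearMap.finrank_range_add_finrank_ker HB.mulVecLin
    rw [Module.finrank_fintype_fun_eq_card, Fintype.card_fin] at h
    exact h
  have hB2 : HB.rank + kbT = rB := by
    have h := LinearMap.finrank_range_add_finrank_ker HBᵀ.mulVecLin
    rw [Module.finrank_fintype_fun_eq_card, Fintype.card_fin] at h
    rw [← Matrix.rank_transpose HB]
    exact h
  have hX := rank_hgpX HA HB
  have hZ := rank_hgpZ HA HB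
  rw [← hka, ← hkbT] at hX
  rw [← hkaT, ← hkb] at hZ
  have hXv : (hgpX HA HB).rank = HA.rank * HB.rank + HA.rank * kbT + ka * HB.rank := by
    have hnr : (HA.rank + ka) * (HB.rank + kbT) =
        HA.rank * HB.rank + HA.rank * kbT + ka * HB.rank + ka * kbT := by ring
    rw [hA1, hB2] at hnr
    rw [hnr] at hX
    exact Nat.add_right_cancel hX
  have hZv : (hgpZ HA HB).rank = HA.rank * HB.rank + HA.rank * kb + kaT * HB.rank := by
    have hnr : (HA.rank + kaT) * (HB.rank + kb) =
        HA.rank * HB.rank + HA.rank * kb + kaT * HB.rank + kaT * kb := by ring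
    rw [hA2, hB1] at hnr
    rw [hnr] at hZ
    exact Nat.add_right_cancel hZ
  have htot : nA * nB + rA * rB =
      ((hgpX HA HB).rank + (hgpZ HA HB).rank) + (ka * kb + kaT * kbT) := by
    have hnr : (HA.rank + ka) * (HB.rank + kb) + (HA.rank + kaT) * (HB.rank + kbT) =
        ((HA.rank * HB.rank + HA.rank * kbT + ka * HB.rank) +
          (HA.rank * HB.rank + HA.rank * kb + kaT * HB.rank)) + (ka * kb + kaT * kbT) := by
      ring
    rw [hA1, hA2, hB1, hB2, ← hXv, ← hZv] at hnr
    exact hnr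
  have hmain : (nA * nB + rA * rB) - (hgpX HA HB).rank - (hgpZ HA HB).rank =
      ka * kb + kaT * kbT := by
    rw [htot, Nat.sub_sub, Nat.add_sub_cancel_left]
  have e1 : nA - HA.rank = ka := by omega
  have e2 : rA - HA.rank = kaT := by omega
  have e3 : nB - HB.rank = kb := by omega
  have e4 : rB - HB.rank = kbT := by omega
  refine ⟨?_, hmain⟩
  rw [e1, e2, e3, e4]
  exact hmain
end
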